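/- arXiv:2603.08110 — 4 statements merged into one kernel-verified Lean document; each statement's English description precedes it below -/
import Mathlib

section
/- A sorting match puzzle of order n ≥ 2 has a unique solution if and only if either (i) r is constant and c is alternating (c j ≠ c (j+1) for all j < n−1), or (ii) c is constant and r is alternating. -/
/-- A solution of the sorting match puzzle `(r, c)` of order `n`:
a bijective filling of the grid respecting all row and column labels. -/
def IsSolution (n : ℕ) (r c : Fin n → Bool) (g : Fin n × Fin n → Fin (n ^ 2)) : Prop :=
  Function.Bijective g ∧
  (∀ i : Fin n, if r i = true then StrictMono (fun j => g (i, j))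
                else StrictAnti (fun j => g (i, j))) ∧
  (∀ j : Fin n, if c j = true then StrictMono (fun i => g (i, j))
                else StrictAnti (fun i => g (i, j)))

/-- Solvability of the sorting match puzzle `(r, c)`. -/
def Solvable (n : ℕ) (r c : Fin n → Bool) : Prop :=
  ∃ g : Fin n × Fin n → Fin (n ^ 2), IsSolution n r c g

namespace SMP
variable {n : ℕ} {r c : Fin n → Bool} {g : Fin n × Fin n → Fin (n ^ 2)}

lemma g_ne (hg : IsSolution n r c g) {x y : Fin n × Fin n} (h : x ≠ y) : g x ≠ g y :=
  fun he => h (hg.1.1 he)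

lemma row_rel (hg : IsSolution n r c g) {i j j' : Fin n} (h : j < j') :
    g (i, j) < g (i, j') ↔ r i = true := by
  have H := hg.2.1 i
  cases hri : r i with
  | true => simp only [hri, if_true] at H; exact ⟨fun _ => rfl, fun _ => H h⟩
  | false =>
    simp only [hri, Bool.false_eq_true, if_false] at H
    exact ⟨fun hlt => absurd (H h) (not_lt.mpr hlt.le), fun he => by cases he⟩

lemma col_rel (hg : IsSolution n r c g) {j i i' : Fin n} (h : i < i') :
    g (i, j) < g (i', j) ↔ c j = true := by
  have H := hg.2.2 j
  cases hcj : c j with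
  | true => simp only [hcj, if_true] at H; exact ⟨fun _ => rfl, fun _ => H h⟩
  | false =>
    simp only [hcj, Bool.false_eq_true, if_false] at H
    exact ⟨fun hlt => absurd (H h) (not_lt.mpr hlt.le), fun he => by cases he⟩

/-- a bijection into `Fin (n^2)` is determined by the strict order it induces -/
lemma eq_of_order_iff {g' : Fin n × Fin n → Fin (n ^ 2)}
    (hb : Function.Bijective g) (hb' : Function.Bijective g')
    (h : ∀ x y, g x < g y ↔ g' x < g' y) : g = g' := by
  have key : ∀ x, (g x).val = (g' x).val := by
    intro x
    have c1 : ∀ (f : Fin n × Fin n → Fin (n ^ 2)), Function.Bijective f →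
        (f x).val = (Finset.univ.filter (fun y => f y < f x)).card := by
      intro f hf
      have : (Finset.univ.filter (fun y => f y < f x)).card
          = (Finset.Iio (f x)).card := by
        apply Finset.card_bij (fun y _ => f y)
        · intro a ha; simp at ha ⊢; exact ha
        · intro a ha b hb hab; exact hf.1 hab
        · intro b hb; simp at hb
          obtain ⟨a, ha⟩ := hf.2 b
          exact ⟨a, by simp [ha, hb], ha⟩
      rw [this, Fin.card_Iio]
    rw [c1 g hb, c1 g' hb']
    congr 1
    apply Finset.filter_congr
    intro y _
    exact h y x
  funext x
  exact Fin.val_injective (key x)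

lemma lt_of_ne_not_lt {N : ℕ} {a b : Fin N} (hne : a ≠ b) (h : ¬ a < b) : b < a :=
  hne.lt_or_gt.resolve_left h

lemma row_lt_true (hg : IsSolution n r c g) {i j j' : Fin n} (hri : r i = true)
    (h : j < j') : g (i, j) < g (i, j') := (row_rel hg h).mpr hri

lemma row_lt_false (hg : IsSolution n r c g) {i j j' : Fin n} (hri : r i = false)
    (h : j < j') : g (i, j') < g (i, j) :=
  lt_of_ne_not_lt (g_ne hg (by simp [Fin.ext_iff]; omega))
    (fun hlt => by rw [row_rel hg h] at hlt; simp [hri] at hlt)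

lemma col_lt_true (hg : IsSolution n r c g) {j i i' : Fin n} (hcj : c j = true)
    (h : i < i') : g (i, j) < g (i', j) := (col_rel hg h).mpr hcj

lemma col_lt_false (hg : IsSolution n r c g) {j i i' : Fin n} (hcj : c j = false)
    (h : i < i') : g (i', j) < g (i, j) :=
  lt_of_ne_not_lt (g_ne hg (by simp [Fin.ext_iff]; omega))
    (fun hlt => by rw [col_rel hg h] at hlt; simp [hcj] at hlt)

lemma block_lt {j t j' t' : ℕ} (hj : j < j') (ht : t < n) : j * n + t < j' * n + t' := by
  have h2 : (j + 1) * n ≤ j' * n := Nat.mul_le_mul_right n hj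
  rw [Nat.add_mul, one_mul] at h2
  omega

/-- the column-snake solution for all-rows-increasing puzzles -/
def csnake (n : ℕ) (c : Fin n → Bool) (x : Fin n × Fin n) : Fin (n ^ 2) :=
  ⟨x.2.val * n + (if c x.2 then x.1.val else n - 1 - x.1.val), by
    have h1 : x.2.val ≤ n - 1 := Nat.le_sub_one_of_lt x.2.isLt
    have h2 : (if c x.2 then x.1.val else n - 1 - x.1.val) ≤ n - 1 := by
      split
      · exact Nat.le_sub_one_of_lt x.1.isLt
      · omega
    have hn1 : 1 ≤ n := x.1.pos
    have h3 : x.2.val * n ≤ (n - 1) * n := Nat.mul_le_mul_right n h1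
    have h4 : (n - 1) * n + (n - 1) < n ^ 2 := by
      have : n ^ 2 = n * n := sq n
      have h5 : (n - 1) * n = n * n - n := by
        rw [Nat.sub_mul, one_mul]
      have h6 : n ≤ n * n := Nat.le_mul_of_pos_left n (by omega)
      omega
    omega⟩

lemma csnake_sol (hr : ∀ i, r i = true) : IsSolution n r c (csnake n c) := by
  have hval : ∀ x : Fin n × Fin n,
      (csnake n c x).val = x.2.val * n + (if c x.2 then x.1.val else n - 1 - x.1.val) :=
    fun _ => rfl
  refine ⟨?_, ?_, ?_⟩
  · rw [Fintype.bijective_iff_injective_and_card]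
    constructor
    · rintro ⟨i, j⟩ ⟨i', j'⟩ he
      have he' := congrArg Fin.val he
      rw [hval, hval] at he'
      simp only at he'
      have hjj : j = j' := by
        by_contra hne
        have hv : j.val ≠ j'.val := fun hh => hne (Fin.ext hh)
        rcases hv.lt_or_gt with h | h
        · exact absurd he' (Nat.ne_of_lt (block_lt h (by split <;> omega)))
        · exact absurd he'.symm (Nat.ne_of_lt (block_lt h (by split <;> omega)))
      subst hjj
      have : i = i' := by
        have hi := i.isLt; have hi' := i'.isLt
        split at he' <;> exact Fin.ext (by omega)
      rw [this]
    · simp [sq]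
  · intro i
    rw [hr i, if_pos rfl]
    intro j j' h
    simp only [Fin.lt_def, hval]
    exact block_lt h (by split <;> omega)
  · intro j
    cases hcj : c j with
    | true =>
      simp only [if_true]
      intro i i' h
      simp only [Fin.lt_def, hval, hcj, if_true]
      omega
    | false =>
      simp only [Bool.false_eq_true, if_false]
      intro i i' h
      simp only [Fin.lt_def, hval, hcj, Bool.false_eq_true, if_false]
      have := i'.isLt
      have h' : i.val < i'.val := h
      omega

lemma stacked_adj (hg : IsSolution n r c g) (hr : ∀ i, r i = true)
    {j j' i i' : Fin n} (hadj : j.val + 1 = j'.val) (hne : c j ≠ c j') :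
    g (i, j) < g (i', j') := by
  have hjj' : j < j' := by rw [Fin.lt_def]; omega
  cases hcj : c j with
  | true =>
    have hcj' : c j' = false := by
      cases h' : c j'
      · rfl
      · exact absurd (hcj.trans h'.symm) hne
    rcases lt_trichotomy i i' with h | h | h
    · exact (col_lt_true hg hcj h).trans (row_lt_true hg (hr i') hjj')
    · rw [h]; exact row_lt_true hg (hr i') hjj'
    · exact (row_lt_true hg (hr i) hjj').trans (col_lt_false hg hcj' h)
  | false =>
    have hcj' : c j' = true := by
      cases h' : c j'
      · exact absurd (hcj.trans h'.symm) hne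
      · rfl
    rcases lt_trichotomy i i' with h | h | h
    · exact (row_lt_true hg (hr i) hjj').trans (col_lt_true hg hcj' h)
    · rw [h]; exact row_lt_true hg (hr i') hjj'
    · exact (col_lt_false hg hcj h).trans (row_lt_true hg (hr i') hjj')

lemma stacked (hg : IsSolution n r c g) (hr : ∀ i, r i = true)
    (hc : ∀ j : Fin n, ∀ hj : j.val + 1 < n, c j ≠ c ⟨j.val + 1, hj⟩) :
    ∀ (d : ℕ) (j j' : Fin n), j.val + 1 + d = j'.val → ∀ i i', g (i, j) < g (i', j') := by
  intro d
  induction d with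
  | zero =>
    intro j j' h i i'
    have hj' : j' = ⟨j.val + 1, by omega⟩ := by
      apply Fin.ext; show j'.val = j.val + 1; omega
    rw [hj']
    exact stacked_adj hg hr rfl (hc j (by omega))
  | succ d ih =>
    intro j j' h i i'
    have hlt : j.val + 1 + d < n := by have := j'.isLt; omega
    have hj' : j' = ⟨j.val + 1 + d + 1, by omega⟩ := by
      apply Fin.ext; show j'.val = j.val + 1 + d + 1; omega
    rw [hj']
    exact (ih j ⟨j.val + 1 + d, hlt⟩ rfl i i).trans
      (stacked_adj hg hr rfl (hc ⟨j.val + 1 + d, hlt⟩ (show j.val + 1 + d + 1 < n by omega)))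

lemma uniq_csnake (hg : IsSolution n r c g) (hr : ∀ i, r i = true)
    (hc : ∀ j : Fin n, ∀ hj : j.val + 1 < n, c j ≠ c ⟨j.val + 1, hj⟩) :
    g = csnake n c := by
  apply eq_of_order_iff hg.1 (csnake_sol hr).1
  rintro ⟨i, j⟩ ⟨i', j'⟩
  have hcs : ∀ (a b : Fin n),
      (csnake n c (a, b)).val = b.val * n + (if c b then a.val else n - 1 - a.val) :=
    fun _ _ => rfl
  rcases lt_trichotomy j.val j'.val with h | h | h
  · refine iff_of_true (stacked hg hr hc (j'.val - j.val - 1) j j' (by omega) i i') ?_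
    rw [Fin.lt_def, hcs, hcs]
    exact block_lt h (by split <;> omega)
  · have hjj : j = j' := Fin.ext h
    subst hjj
    rcases lt_trichotomy i i' with hi | hi | hi
    · cases hcj : c j with
      | true =>
        refine iff_of_true (col_lt_true hg hcj hi) ?_
        rw [Fin.lt_def, hcs, hcs, if_pos hcj, if_pos hcj]
        have : i.val < i'.val := hi
        omega
      | false =>
        refine iff_of_false (asymm (col_lt_false hg hcj hi)) ?_
        rw [Fin.lt_def, hcs, hcs, if_neg (by simp [hcj]), if_neg (by simp [hcj])]
        have : i.val < i'.val := hi
        have := i'.isLt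
        omega
    · subst hi
      exact iff_of_false (lt_irrefl _) (lt_irrefl _)
    · cases hcj : c j with
      | true =>
        refine iff_of_false (asymm (col_lt_true hg hcj hi)) ?_
        rw [Fin.lt_def, hcs, hcs, if_pos hcj, if_pos hcj]
        have : i'.val < i.val := hi
        omega
      | false =>
        refine iff_of_true (col_lt_false hg hcj hi) ?_
        rw [Fin.lt_def, hcs, hcs, if_neg (by simp [hcj]), if_neg (by simp [hcj])]
        have : i'.val < i.val := hi
        have := i.isLt
        omega
  · refine iff_of_false (asymm (stacked hg hr hc (j.val - j'.val - 1) j' j (by omega) i' i)) ?_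
    rw [Fin.lt_def, hcs, hcs]
    intro hlt
    have hb := block_lt (n := n) (j := j'.val)
      (t := if c j' = true then i'.val else n - 1 - i'.val) (j' := j.val)
      (t' := if c j = true then i.val else n - 1 - i.val) h (by split <;> omega)
    omega

/-- uniqueness+existence for the all-rows-true, alternating-columns case -/
lemma existsUnique_of_rtrue_calt (hr : ∀ i, r i = true)
    (hc : ∀ j : Fin n, ∀ hj : j.val + 1 < n, c j ≠ c ⟨j.val + 1, hj⟩) :
    ∃! g : Fin n × Fin n → Fin (n ^ 2), IsSolution n r c g :=
  ⟨csnake n c, csnake_sol hr, fun g hg => uniq_csnake hg hr hc⟩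

lemma existsUnique_transfer {α : Sort*} {P Q : α → Prop} (Φ : α → α)
    (hΦ : ∀ a, Φ (Φ a) = a) (hPQ : ∀ a, P a → Q (Φ a)) (hQP : ∀ a, Q a → P (Φ a)) :
    (∃! a, P a) → (∃! a, Q a) := by
  rintro ⟨g, hg, hu⟩
  refine ⟨Φ g, hPQ g hg, fun y hy => ?_⟩
  have h2 := hu (Φ y) (hQP y hy)
  rw [← h2, hΦ]

lemma sol_congr {r' c' : Fin n → Bool} (hr : ∀ i, r i = r' i) (hc : ∀ j, c j = c' j)
    (hg : IsSolution n r c g) : IsSolution n r' c' g := by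
  obtain rfl : r = r' := funext hr
  obtain rfl : c = c' := funext hc
  exact hg

lemma sol_transpose (hg : IsSolution n r c g) :
    IsSolution n c r (fun p => g (p.2, p.1)) :=
  ⟨hg.1.comp Prod.swap_bijective, fun i => hg.2.2 i, fun j => hg.2.1 j⟩

lemma sol_flip (hg : IsSolution n r c g) :
    IsSolution n (fun i => !(r i)) (fun j => !(c j)) (fun p => (g p).rev) := by
  refine ⟨(Fin.rev_bijective).comp hg.1, fun i => ?_, fun j => ?_⟩
  · have H := hg.2.1 i
    cases hri : r i with
    | true =>
      simp only [hri, if_true] at H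
      simp only [hri, Bool.not_true, Bool.false_eq_true, if_false]
      exact fun a b h => Fin.rev_lt_rev.mpr (H h)
    | false =>
      simp only [hri, Bool.false_eq_true, if_false] at H
      simp only [hri, Bool.not_false, if_true]
      exact fun a b h => Fin.rev_lt_rev.mpr (H h)
  · have H := hg.2.2 j
    cases hcj : c j with
    | true =>
      simp only [hcj, if_true] at H
      simp only [hcj, Bool.not_true, Bool.false_eq_true, if_false]
      exact fun a b h => Fin.rev_lt_rev.mpr (H h)
    | false =>
      simp only [hcj, Bool.false_eq_true, if_false] at H
      simp only [hcj, Bool.not_false, if_true]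
      exact fun a b h => Fin.rev_lt_rev.mpr (H h)

lemma sol_rowflip (hg : IsSolution n r c g) :
    IsSolution n (fun i => r i.rev) (fun j => !(c j)) (fun p => g (p.1.rev, p.2)) := by
  refine ⟨⟨?_, ?_⟩, fun i => hg.2.1 i.rev, fun j => ?_⟩
  · rintro ⟨a, b⟩ ⟨a', b'⟩ he
    have := hg.1.1 he
    simp only [Prod.mk.injEq] at this ⊢
    exact ⟨Fin.rev_injective this.1, this.2⟩
  · intro v
    obtain ⟨⟨p, q⟩, hpq⟩ := hg.1.2 v
    exact ⟨(p.rev, q), by simpa using hpq⟩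
  · have H := hg.2.2 j
    cases hcj : c j with
    | true =>
      simp only [hcj, if_true] at H
      simp only [hcj, Bool.not_true, Bool.false_eq_true, if_false]
      exact fun a b h => H (Fin.rev_lt_rev.mpr h)
    | false =>
      simp only [hcj, Bool.false_eq_true, if_false] at H
      simp only [hcj, Bool.not_false, if_true]
      exact fun a b h => H (Fin.rev_lt_rev.mpr h)

lemma sol_colflip (hg : IsSolution n r c g) :
    IsSolution n (fun i => !(r i)) (fun j => c j.rev) (fun p => g (p.1, p.2.rev)) := by
  refine ⟨⟨?_, ?_⟩, fun i => ?_, fun j => hg.2.2 j.rev⟩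
  · rintro ⟨a, b⟩ ⟨a', b'⟩ he
    have := hg.1.1 he
    simp only [Prod.mk.injEq] at this ⊢
    exact ⟨this.1, Fin.rev_injective this.2⟩
  · intro v
    obtain ⟨⟨p, q⟩, hpq⟩ := hg.1.2 v
    exact ⟨(p, q.rev), by simpa using hpq⟩
  · have H := hg.2.1 i
    cases hri : r i with
    | true =>
      simp only [hri, if_true] at H
      simp only [hri, Bool.not_true, Bool.false_eq_true, if_false]
      exact fun a b h => H (Fin.rev_lt_rev.mpr h)
    | false =>
      simp only [hri, Bool.false_eq_true, if_false] at H
      simp only [hri, Bool.not_false, if_true]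
      exact fun a b h => H (Fin.rev_lt_rev.mpr h)

lemma swap_sol (hg : IsSolution n r c g) {x y : Fin n × Fin n}
    (h1 : x.1 ≠ y.1) (h2 : x.2 ≠ y.2) (hk : (g y).val = (g x).val + 1) :
    IsSolution n r c (g ∘ (Equiv.swap x y)) := by
  have hxyne : x ≠ y := fun he => h1 (congrArg Prod.fst he)
  have hswapval : ∀ u, g (Equiv.swap x y u) = if u = x then g y else if u = y then g x else g u := by
    intro u
    rcases eq_or_ne u x with rfl | hux
    · simp
    rcases eq_or_ne u y with rfl | huy
    · simp [hux]
    · simp [Equiv.swap_apply_of_ne_of_ne hux huy, hux, huy]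
  have hval : ∀ u : Fin n × Fin n, u ≠ x → u ≠ y →
      (g u).val ≠ (g x).val ∧ (g u).val ≠ (g y).val := fun u hux huy =>
    ⟨fun he => hux (hg.1.1 (Fin.val_injective he)),
     fun he => huy (hg.1.1 (Fin.val_injective he))⟩
  have key : ∀ z w : Fin n × Fin n, (z.1 = w.1 ∨ z.2 = w.2) → z ≠ w →
      (g (Equiv.swap x y z) < g (Equiv.swap x y w) ↔ g z < g w) := by
    intro z w hsh hzw
    have hnot : ¬(z = x ∧ w = y) := by
      rintro ⟨rfl, rfl⟩; rcases hsh with h | h; exacts [h1 h, h2 h]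
    have hnot' : ¬(z = y ∧ w = x) := by
      rintro ⟨rfl, rfl⟩; rcases hsh with h | h; exacts [h1 h.symm, h2 h.symm]
    by_cases hzx : z = x
    · by_cases hwx : w = x
      · exact absurd (hzx.trans hwx.symm) hzw
      by_cases hwy : w = y
      · exact absurd ⟨hzx, hwy⟩ hnot
      obtain ⟨hv1, hv2⟩ := hval w hwx hwy
      rw [hswapval z, hswapval w, if_pos hzx, if_neg hwx, if_neg hwy, hzx,
        Fin.lt_def, Fin.lt_def]
      omega
    by_cases hzy : z = y
    · by_cases hwx : w = x
      · exact absurd ⟨hzy, hwx⟩ hnot'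
      by_cases hwy : w = y
      · exact absurd (hzy.trans hwy.symm) hzw
      obtain ⟨hv1, hv2⟩ := hval w hwx hwy
      rw [hswapval z, hswapval w, if_neg hzx, if_pos hzy, if_neg hwx, if_neg hwy, hzy,
        Fin.lt_def, Fin.lt_def]
      omega
    by_cases hwx : w = x
    · obtain ⟨hv1, hv2⟩ := hval z hzx hzy
      rw [hswapval z, hswapval w, if_neg hzx, if_neg hzy, if_pos hwx, hwx,
        Fin.lt_def, Fin.lt_def]
      omega
    by_cases hwy : w = y
    · obtain ⟨hv1, hv2⟩ := hval z hzx hzy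
      rw [hswapval z, hswapval w, if_neg hzx, if_neg hzy, if_neg hwx, if_pos hwy, hwy,
        Fin.lt_def, Fin.lt_def]
      omega
    · rw [hswapval z, hswapval w, if_neg hzx, if_neg hzy, if_neg hwx, if_neg hwy]
  refine ⟨hg.1.comp (Equiv.swap x y).bijective, fun i => ?_, fun j => ?_⟩
  · have H := hg.2.1 i
    cases hri : r i with
    | true =>
      simp only [hri, if_true] at H ⊢
      intro a b hab
      exact (key (i, a) (i, b) (Or.inl rfl) (by simp [Prod.ext_iff]; exact Fin.ne_of_lt hab)).mpr (H hab)
    | false =>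
      simp only [hri, Bool.false_eq_true, if_false] at H ⊢
      intro a b hab
      exact (key (i, b) (i, a) (Or.inl rfl) (by simp [Prod.ext_iff]; exact Fin.ne_of_gt hab)).mpr (H hab)
  · have H := hg.2.2 j
    cases hcj : c j with
    | true =>
      simp only [hcj, if_true] at H ⊢
      intro a b hab
      exact (key (a, j) (b, j) (Or.inr rfl) (by simp [Prod.ext_iff]; exact Fin.ne_of_lt hab)).mpr (H hab)
    | false =>
      simp only [hcj, Bool.false_eq_true, if_false] at H ⊢
      intro a b hab
      exact (key (b, j) (a, j) (Or.inr rfl) (by simp [Prod.ext_iff]; exact Fin.ne_of_gt hab)).mpr (H hab)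

lemma chain_of_unique (hu : ∃! g' : Fin n × Fin n → Fin (n ^ 2), IsSolution n r c g')
    (hg : IsSolution n r c g) {x y : Fin n × Fin n} (hxy : (g y).val = (g x).val + 1) :
    (x.1 = y.1 ∧ (y.2.val = x.2.val + 1 ∨ x.2.val = y.2.val + 1)) ∨
    (x.2 = y.2 ∧ (y.1.val = x.1.val + 1 ∨ x.1.val = y.1.val + 1)) := by
  have hne : x ≠ y := by intro h; rw [h] at hxy; omega
  have hshare : x.1 = y.1 ∨ x.2 = y.2 := by
    by_contra hcon
    push_neg at hcon
    have hsw := swap_sol hg hcon.1 hcon.2 hxy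
    obtain ⟨g0, hg0, huniq⟩ := hu
    have e1 := huniq g hg
    have e2 := huniq _ hsw
    have : g ∘ (Equiv.swap x y) = g := e2.trans e1.symm
    have := congrFun this x
    simp only [Function.comp_apply, Equiv.swap_apply_left] at this
    rw [this] at hxy
    omega
  rcases hshare with h | h
  · left
    refine ⟨h, ?_⟩
    have h2 : x.2 ≠ y.2 := fun h2 => hne (Prod.ext h h2)
    have hex : x = (x.1, x.2) := rfl
    have hey : y = (x.1, y.2) := by rw [h]
    by_contra hcon
    push_neg at hcon
    rcases (show x.2.val ≠ y.2.val from fun hh => h2 (Fin.ext hh)).lt_or_gt with hlt | hlt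
    · have hm : x.2.val + 1 < n := by have := y.2.isLt; omega
      set m : Fin n := ⟨x.2.val + 1, hm⟩ with hmdef
      have hxm : x.2 < m := by rw [Fin.lt_def]; exact Nat.lt_succ_self _
      have hmy : m < y.2 := by rw [Fin.lt_def]; show x.2.val + 1 < y.2.val; omega
      cases hri : r x.1 with
      | true =>
        have a1 := row_lt_true hg hri (i := x.1) hxm
        have a2 := row_lt_true hg hri (i := x.1) hmy
        rw [← hex] at a1
        rw [← hey] at a2
        rw [Fin.lt_def] at a1 a2
        omega
      | false =>
        have a1 := row_lt_false hg hri (i := x.1) hxm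
        have a2 := row_lt_false hg hri (i := x.1) hmy
        rw [← hex] at a1
        rw [← hey] at a2
        rw [Fin.lt_def] at a1 a2
        omega
    · have hm : y.2.val + 1 < n := by have := x.2.isLt; omega
      set m : Fin n := ⟨y.2.val + 1, hm⟩ with hmdef
      have hym : y.2 < m := by rw [Fin.lt_def]; exact Nat.lt_succ_self _
      have hmx : m < x.2 := by rw [Fin.lt_def]; show y.2.val + 1 < x.2.val; omega
      cases hri : r x.1 with
      | true =>
        have a1 := row_lt_true hg hri (i := x.1) hym
        have a2 := row_lt_true hg hri (i := x.1) hmx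
        rw [← hex] at a2
        rw [← hey] at a1
        rw [Fin.lt_def] at a1 a2
        omega
      | false =>
        have a1 := row_lt_false hg hri (i := x.1) hym
        have a2 := row_lt_false hg hri (i := x.1) hmx
        rw [← hex] at a2
        rw [← hey] at a1
        rw [Fin.lt_def] at a1 a2
        omega
  · right
    refine ⟨h, ?_⟩
    have h1 : x.1 ≠ y.1 := fun h1 => hne (Prod.ext h1 h)
    have hex : x = (x.1, x.2) := rfl
    have hey : y = (y.1, x.2) := by rw [h]
    by_contra hcon
    push_neg at hcon
    rcases (show x.1.val ≠ y.1.val from fun hh => h1 (Fin.ext hh)).lt_or_gt with hlt | hlt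
    · have hm : x.1.val + 1 < n := by have := y.1.isLt; omega
      set m : Fin n := ⟨x.1.val + 1, hm⟩ with hmdef
      have hxm : x.1 < m := by rw [Fin.lt_def]; exact Nat.lt_succ_self _
      have hmy : m < y.1 := by rw [Fin.lt_def]; show x.1.val + 1 < y.1.val; omega
      cases hcj : c x.2 with
      | true =>
        have a1 := col_lt_true hg hcj (j := x.2) hxm
        have a2 := col_lt_true hg hcj (j := x.2) hmy
        rw [← hex] at a1
        rw [← hey] at a2
        rw [Fin.lt_def] at a1 a2
        omega
      | false =>
        have a1 := col_lt_false hg hcj (j := x.2) hxm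
        have a2 := col_lt_false hg hcj (j := x.2) hmy
        rw [← hex] at a1
        rw [← hey] at a2
        rw [Fin.lt_def] at a1 a2
        omega
    · have hm : y.1.val + 1 < n := by have := x.1.isLt; omega
      set m : Fin n := ⟨y.1.val + 1, hm⟩ with hmdef
      have hym : y.1 < m := by rw [Fin.lt_def]; exact Nat.lt_succ_self _
      have hmx : m < x.1 := by rw [Fin.lt_def]; show y.1.val + 1 < x.1.val; omega
      cases hcj : c x.2 with
      | true =>
        have a1 := col_lt_true hg hcj (j := x.2) hym
        have a2 := col_lt_true hg hcj (j := x.2) hmx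
        rw [← hex] at a2
        rw [← hey] at a1
        rw [Fin.lt_def] at a1 a2
        omega
      | false =>
        have a1 := col_lt_false hg hcj (j := x.2) hym
        have a2 := col_lt_false hg hcj (j := x.2) hmx
        rw [← hex] at a2
        rw [← hey] at a1
        rw [Fin.lt_def] at a1 a2
        omega

lemma divmod_mk {n i t : ℕ} (hn : 0 < n) (ht : t < n) :
    (i * n + t) / n = i ∧ (i * n + t) % n = t := by
  constructor
  · rw [Nat.add_comm, Nat.mul_comm, Nat.add_mul_div_left _ _ hn, Nat.div_eq_of_lt ht,
      Nat.zero_add]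
  · rw [Nat.add_comm, Nat.mul_comm, Nat.add_mul_mod_self_left, Nat.mod_eq_of_lt ht]

/-- the row-boustrophedon value of a cell -/
def bval (n : ℕ) (x : Fin n × Fin n) : ℕ :=
  x.1.val * n + (if Even x.1.val then x.2.val else n - 1 - x.2.val)

lemma bval_lt (x : Fin n × Fin n) : bval n x < n ^ 2 := by
  have h1 := x.1.isLt
  have h2 := x.2.isLt
  have h3 : x.1.val * n ≤ (n - 1) * n := Nat.mul_le_mul_right n (by omega)
  have h4 : (n - 1) * n = n * n - n := by rw [Nat.sub_mul, one_mul]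
  have h5 : n ≤ n * n := Nat.le_mul_of_pos_left n (by omega)
  have h6 : n ^ 2 = n * n := sq n
  unfold bval
  split <;> omega

/-- the cell holding value `k` in the row-boustrophedon -/
def bcell (n : ℕ) (k : ℕ) (h : k < n ^ 2) : Fin n × Fin n :=
  have hn0 : 0 < n := by
    rcases Nat.eq_zero_or_pos n with rfl | h'
    · exact absurd h (by simp)
    · exact h'
  (⟨k / n, by rw [Nat.div_lt_iff_lt_mul hn0]; rw [sq] at h; exact h⟩,
   ⟨if Even (k / n) then k % n else n - 1 - k % n, by
      have := Nat.mod_lt k hn0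
      split <;> omega⟩)

lemma bcell_fst (k : ℕ) (h : k < n ^ 2) : (bcell n k h).1.val = k / n := rfl

lemma bcell_snd (k : ℕ) (h : k < n ^ 2) :
    (bcell n k h).2.val = if Even (k / n) then k % n else n - 1 - k % n := rfl

lemma bval_bcell (k : ℕ) (h : k < n ^ 2) : bval n (bcell n k h) = k := by
  have hn0 : 0 < n := by
    rcases Nat.eq_zero_or_pos n with rfl | h'
    · exact absurd h (by simp)
    · exact h'
  have hmod := Nat.mod_lt k hn0
  have hdm := Nat.div_add_mod' k n
  unfold bval
  rw [bcell_fst, bcell_snd]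
  rcases Nat.even_or_odd (k / n) with he | ho
  · rw [if_pos he, if_pos he]; omega
  · rw [if_neg (Nat.not_even_iff_odd.mpr ho), if_neg (Nat.not_even_iff_odd.mpr ho)]; omega

lemma bcell_bval (x : Fin n × Fin n) (h : bval n x < n ^ 2) : bcell n (bval n x) h = x := by
  have hn0 : 0 < n := x.1.pos
  have h2 := x.2.isLt
  have hcr : (if Even x.1.val then x.2.val else n - 1 - x.2.val) < n := by split <;> omega
  obtain ⟨hdiv, hmod⟩ := divmod_mk (i := x.1.val)
    (t := if Even x.1.val then x.2.val else n - 1 - x.2.val) hn0 hcr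
  have hbd : bval n x / n = x.1.val := hdiv
  have hbm : bval n x % n = (if Even x.1.val then x.2.val else n - 1 - x.2.val) := hmod
  have e1 : (bcell n (bval n x) h).1 = x.1 := Fin.ext (by rw [bcell_fst, hbd])
  have e2 : (bcell n (bval n x) h).2 = x.2 := by
    apply Fin.ext
    rw [bcell_snd, hbd, hbm]
    rcases Nat.even_or_odd x.1.val with he | ho
    · rw [if_pos he, if_pos he]
    · rw [if_neg (Nat.not_even_iff_odd.mpr ho), if_neg (Nat.not_even_iff_odd.mpr ho)]; omega
  exact Prod.ext e1 e2

set_option maxHeartbeats 1600000 in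
lemma snake_key (hn : 2 ≤ n)
    (hu : ∃! g' : Fin n × Fin n → Fin (n ^ 2), IsSolution n r c g')
    (hg : IsSolution n r c g)
    (h00 : (g (⟨0, by omega⟩, ⟨0, by omega⟩)).val = 0)
    (h01 : (g (⟨0, by omega⟩, ⟨1, by omega⟩)).val = 1) :
    ∀ k (h : k < n ^ 2), (g (bcell n k h)).val = k := by
  have hn0 : 0 < n := by omega
  have hsq : n ^ 2 = n * n := sq n
  intro k
  induction k using Nat.strong_induction_on with
  | _ K IH =>
    intro hK
    rcases Nat.lt_or_ge K 2 with hK2 | hK2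
    · rcases (show K = 0 ∨ K = 1 by omega) with rfl | rfl
      · have hb : bcell n 0 hK = (⟨0, by omega⟩, ⟨0, by omega⟩) := by
          apply Prod.ext <;> apply Fin.ext
          · rw [bcell_fst]; simp
          · rw [bcell_snd]; simp
        rw [hb]; exact h00
      · have hd : 1 / n = 0 := Nat.div_eq_of_lt (by omega)
        have hm : 1 % n = 1 := Nat.mod_eq_of_lt (by omega)
        have hb : bcell n 1 hK = (⟨0, by omega⟩, ⟨1, by omega⟩) := by
          apply Prod.ext <;> apply Fin.ext
          · rw [bcell_fst, hd]
          · rw [bcell_snd, hd, hm, if_pos (Even.zero)]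
        rw [hb]; exact h01
    · obtain ⟨k, rfl⟩ : ∃ k, K = k + 1 := ⟨K - 1, by omega⟩
      have hk : k < n ^ 2 := by omega
      have hk1 : 1 ≤ k := by omega
      obtain ⟨i, hidef⟩ : ∃ v, k / n = v := ⟨k / n, rfl⟩
      obtain ⟨m, hmdef⟩ : ∃ v, k % n = v := ⟨k % n, rfl⟩
      have hm_lt : m < n := by rw [← hmdef]; exact Nat.mod_lt k hn0
      have hdm : i * n + m = k := by
        rw [← hidef, ← hmdef, Nat.mul_comm]; exact Nat.div_add_mod k n
      have hi_lt : i < n := by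
        have h9 := (bcell n k hk).1.isLt
        rw [bcell_fst, hidef] at h9
        exact h9
      have prev : (g (bcell n k hk)).val = k := IH k (by omega) hk
      have hvv : ∀ z : Fin n × Fin n, bval n z ≤ k → (g z).val = bval n z := by
        intro z hz
        have hzlt : bval n z < n ^ 2 := bval_lt z
        have h2 := IH (bval n z) (by omega) hzlt
        rw [bcell_bval z hzlt] at h2
        exact h2
      have hunvis : ∀ z : Fin n × Fin n, (g z).val ≤ k → bval n z = (g z).val := by
        intro z hle
        have h1 := (g z).isLt
        have h2 := IH (g z).val (by omega) h1
        have h3 : z = bcell n (g z).val h1 :=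
          hg.1.1 (Fin.val_injective h2.symm)
        rw [h3, bval_bcell]
        exact h2.symm
      have hrowbig : ∀ z : Fin n × Fin n, i < z.1.val → k < (g z).val := by
        intro z hz
        by_contra hle
        push_neg at hle
        have h1 := (g z).isLt
        have h2 := IH (g z).val (by omega) h1
        have h3 : z = bcell n (g z).val h1 :=
          hg.1.1 (Fin.val_injective h2.symm)
        have h4 : z.1.val = (g z).val / n := by rw [h3, bcell_fst, h2]
        have h5 : (g z).val / n ≤ k / n := Nat.div_le_div_right hle
        rw [hidef] at h5
        omega
      obtain ⟨x, hx⟩ := hg.1.2 ⟨k + 1, hK⟩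
      have hxval : (g x).val = k + 1 := by rw [hx]
      have hch := chain_of_unique hu hg (x := bcell n k hk) (y := x) (by rw [prev, hxval])
      have hz1 : (bcell n k hk).1.val = i := by rw [bcell_fst, hidef]
      have hz2 : (bcell n k hk).2.val = if Even i then m else n - 1 - m := by
        rw [bcell_snd, hidef, hmdef]
      suffices hxeq : x = bcell n (k + 1) hK by rw [← hxeq]; exact hxval
      rcases Nat.lt_or_ge (m + 1) n with hmid | hend
      · -- mid-row case
        have htar : (k + 1) / n = i ∧ (k + 1) % n = m + 1 := by
          have h5 := divmod_mk (n := n) (i := i) (t := m + 1) hn0 hmid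
          rw [show i * n + (m + 1) = k + 1 by omega] at h5
          exact h5
        rcases hch with ⟨hr1, hr2⟩ | ⟨hc1, hc2⟩
        · -- same row
          have hx1 : x.1.val = i := by rw [← hr1, hz1]
          rcases hr2 with hfwd | hbwd
          · -- x.2.val = z.2.val + 1
            rw [hz2] at hfwd
            rcases Nat.even_or_odd i with hpar | hpar
            · -- even : forward = target
              rw [if_pos hpar] at hfwd
              apply Prod.ext <;> apply Fin.ext
              · rw [bcell_fst, htar.1]; exact hx1
              · rw [bcell_snd, htar.1, htar.2, if_pos hpar]; exact hfwd
            · -- odd : x is the previously visited cell (i, n-m)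
              exfalso
              rw [if_neg (Nat.not_even_iff_odd.mpr hpar)] at hfwd
              have hm1 : 1 ≤ m := by
                by_contra hmz
                have : x.2.val = n := by omega
                have := x.2.isLt
                omega
              have hbv : bval n x = i * n + (m - 1) := by
                unfold bval
                rw [hx1, if_neg (Nat.not_even_iff_odd.mpr hpar)]
                omega
              have := hvv x (by omega)
              omega
          · -- z.2.val = x.2.val + 1
            rw [hz2] at hbwd
            rcases Nat.even_or_odd i with hpar | hpar
            · -- even : x is previously visited cell (i, m-1)
              exfalso
              rw [if_pos hpar] at hbwd
              have hbv : bval n x = i * n + (m - 1) := by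
                unfold bval
                rw [hx1, if_pos hpar]
                omega
              have := hvv x (by omega)
              omega
            · -- odd : backward = target col n-2-m
              rw [if_neg (Nat.not_even_iff_odd.mpr hpar)] at hbwd
              apply Prod.ext <;> apply Fin.ext
              · rw [bcell_fst, htar.1]; exact hx1
              · rw [bcell_snd, htar.1, htar.2,
                  if_neg (Nat.not_even_iff_odd.mpr hpar)]
                omega
        · -- same column
          have hx2 : x.2.val = (if Even i then m else n - 1 - m) := by rw [← hc1, hz2]
          rcases hc2 with hdown | hup
          · -- deviation : contradiction
            exfalso
            rw [hz1] at hdown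
            have hxlt := x.1.isLt
            have hxe : x = (x.1, x.2) := rfl
            rcases Nat.eq_zero_or_pos m with hm0 | hm1
            · -- m = 0 : start of a row
              have hi1 : 1 ≤ i := by
                rcases Nat.eq_zero_or_pos i with h7 | h7
                · rw [h7] at hdm; omega
                · exact h7
              obtain ⟨z, hzdef⟩ : ∃ z, z = bcell n k hk := ⟨_, rfl⟩
              have prevz : (g z).val = k := by rw [hzdef]; exact prev
              have hz1' : z.1.val = i := by rw [hzdef]; exact hz1
              have hze : z = (z.1, z.2) := rfl
              obtain ⟨i', hii⟩ : ∃ i', i = i' + 1 := ⟨i - 1, by omega⟩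
              have hsm' : (i' + 1) * n = i' * n + n := Nat.succ_mul i' n
              have hkval : i' * n + n = k := by rw [hii] at hdm; omega
              rcases Nat.even_or_odd i with hpar | hpar
              · -- even row start, inner column is 1
                have hz2v : z.2.val = 0 := by rw [hzdef, hz2, if_pos hpar]; omega
                obtain ⟨einner, hein⟩ : ∃ e : Fin n, e.val = 1 := ⟨⟨1, by omega⟩, rfl⟩
                have hbvP : bval n (z.1, einner) = k + 1 := by
                  show z.1.val * n + (if Even z.1.val then einner.val else n - 1 - einner.val)
                      = k + 1
                  rw [hz1', if_pos hpar, hein]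
                  omega
                have hvP_ne : (g (z.1, einner)).val ≠ k + 1 := by
                  intro he
                  have he2 : g (z.1, einner) = g x := Fin.val_injective (by rw [he, hxval])
                  have he3 : z.1.val = x.1.val := congrArg (fun p => p.1.val) (hg.1.1 he2)
                  omega
                have hvP_gt : k + 1 < (g (z.1, einner)).val := by
                  rcases Nat.lt_or_ge k ((g (z.1, einner)).val) with h7 | h7
                  · omega
                  · have := hunvis (z.1, einner) h7
                    omega
                obtain ⟨y, hy⟩ := hg.1.2 ⟨(g (z.1, einner)).val - 1,
                  by have := (g (z.1, einner)).isLt; omega⟩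
                have hyval : (g y).val = (g (z.1, einner)).val - 1 := by rw [hy]
                have hye : y = (y.1, y.2) := rfl
                have hch2 := chain_of_unique hu hg (x := y) (y := (z.1, einner))
                  (by rw [hyval]; omega)
                rcases hch2 with ⟨ha1, ha2⟩ | ⟨hb1, hb2⟩
                · -- same row i
                  have ha1' : y.1 = z.1 := ha1
                  have ha2' : einner.val = y.2.val + 1 ∨ y.2.val = einner.val + 1 := ha2
                  rcases ha2' with hA | hB
                  · -- y is the row-start cell z
                    have hyz : y = z :=
                      Prod.ext ha1' (Fin.ext (show y.2.val = z.2.val by omega))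
                    rw [hyz, prevz] at hyval
                    omega
                  · -- y is at column 2 ; contradicts increasing row direction
                    have hrz : r z.1 = true := by
                      refine (row_rel hg (i := z.1) (j := z.2) (j' := einner)
                        (by rw [Fin.lt_def]; omega)).mp ?_
                      rw [← hze, Fin.lt_def, prevz]
                      omega
                    have hylt := row_lt_true hg hrz (i := z.1) (j := einner) (j' := y.2)
                      (by rw [Fin.lt_def]; omega)
                    have hy' : (z.1, y.2) = y := by rw [hye]; exact Prod.ext ha1'.symm rfl
                    rw [hy', Fin.lt_def, hyval] at hylt
                    omega
                · -- same column einner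
                  have hb1' : y.2 = einner := hb1
                  have hb2' : z.1.val = y.1.val + 1 ∨ y.1.val = z.1.val + 1 := hb2
                  rcases hb2' with hC | hD
                  · -- y in row i-1 : visited
                    have hbvy : bval n y ≤ i' * n + (n - 1) := by
                      show y.1.val * n + (if Even y.1.val then y.2.val else n - 1 - y.2.val)
                          ≤ i' * n + (n - 1)
                      rw [show y.1.val = i' by omega]
                      have := y.2.isLt
                      split <;> omega
                    have := hvv y (by omega)
                    omega
                  · -- y in row i+1 : contradiction via column direction
                    have hcein : c einner = false := by
                      cases hce : c einner
                      · rfl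
                      exfalso
                      have hlt2 := col_lt_true hg hce (i := z.1) (i' := y.1) (j := einner)
                        (by rw [Fin.lt_def]; omega)
                      have hy' : (y.1, einner) = y := by
                        rw [hye]; exact Prod.ext rfl hb1'.symm
                      rw [hy', Fin.lt_def, hyval] at hlt2
                      omega
                    obtain ⟨yim, hyimv⟩ : ∃ e : Fin n, e.val = i' := ⟨⟨i', by omega⟩, rfl⟩
                    have hlt3 := col_lt_false hg hcein (i := yim) (i' := z.1) (j := einner)
                      (by rw [Fin.lt_def]; omega)
                    rw [Fin.lt_def] at hlt3
                    have hbvy : bval n (yim, einner) ≤ i' * n + (n - 1) := by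
                      show yim.val * n + (if Even yim.val then einner.val else n - 1 - einner.val)
                          ≤ i' * n + (n - 1)
                      rw [hyimv]
                      split <;> omega
                    have := hvv (yim, einner) (by omega)
                    omega
              · -- odd row start, inner column is n-2
                have hnodd : ¬ Even i := Nat.not_even_iff_odd.mpr hpar
                have hz2v : z.2.val = n - 1 := by
                  rw [hzdef, hz2, if_neg hnodd]
                  omega
                obtain ⟨einner, hein⟩ : ∃ e : Fin n, e.val = n - 2 := ⟨⟨n - 2, by omega⟩, rfl⟩
                have hbvP : bval n (z.1, einner) = k + 1 := by
                  show z.1.val * n + (if Even z.1.val then einner.val else n - 1 - einner.val)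
                      = k + 1
                  rw [hz1', if_neg hnodd, hein]
                  omega
                have hvP_ne : (g (z.1, einner)).val ≠ k + 1 := by
                  intro he
                  have he2 : g (z.1, einner) = g x := Fin.val_injective (by rw [he, hxval])
                  have he3 : z.1.val = x.1.val := congrArg (fun p => p.1.val) (hg.1.1 he2)
                  omega
                have hvP_gt : k + 1 < (g (z.1, einner)).val := by
                  rcases Nat.lt_or_ge k ((g (z.1, einner)).val) with h7 | h7
                  · omega
                  · have := hunvis (z.1, einner) h7
                    omega
                obtain ⟨y, hy⟩ := hg.1.2 ⟨(g (z.1, einner)).val - 1,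
                  by have := (g (z.1, einner)).isLt; omega⟩
                have hyval : (g y).val = (g (z.1, einner)).val - 1 := by rw [hy]
                have hye : y = (y.1, y.2) := rfl
                have hch2 := chain_of_unique hu hg (x := y) (y := (z.1, einner))
                  (by rw [hyval]; omega)
                rcases hch2 with ⟨ha1, ha2⟩ | ⟨hb1, hb2⟩
                · -- same row i
                  have ha1' : y.1 = z.1 := ha1
                  have ha2' : einner.val = y.2.val + 1 ∨ y.2.val = einner.val + 1 := ha2
                  rcases ha2' with hA | hB
                  · -- y at column n-3 ; contradicts decreasing row direction
                    have hn3 : 3 ≤ n := by omega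
                    have hrz : r z.1 = false := by
                      cases hre : r z.1 with
                      | false => rfl
                      | true =>
                        exfalso
                        have hlt2 := row_lt_true hg hre (i := z.1) (j := einner) (j' := z.2)
                          (by rw [Fin.lt_def]; omega)
                        rw [← hze, Fin.lt_def, prevz] at hlt2
                        omega
                    have hylt := row_lt_false hg hrz (i := z.1) (j := y.2) (j' := einner)
                      (by rw [Fin.lt_def]; omega)
                    have hy' : (z.1, y.2) = y := by rw [hye]; exact Prod.ext ha1'.symm rfl
                    rw [hy', Fin.lt_def, hyval] at hylt
                    omega
                  · -- y is the row-start cell z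
                    have hyz : y = z :=
                      Prod.ext ha1' (Fin.ext (show y.2.val = z.2.val by omega))
                    rw [hyz, prevz] at hyval
                    omega
                · -- same column einner
                  have hb1' : y.2 = einner := hb1
                  have hb2' : z.1.val = y.1.val + 1 ∨ y.1.val = z.1.val + 1 := hb2
                  rcases hb2' with hC | hD
                  · -- y in row i-1 : visited
                    have hbvy : bval n y ≤ i' * n + (n - 1) := by
                      show y.1.val * n + (if Even y.1.val then y.2.val else n - 1 - y.2.val)
                          ≤ i' * n + (n - 1)
                      rw [show y.1.val = i' by omega]
                      have := y.2.isLt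
                      split <;> omega
                    have := hvv y (by omega)
                    omega
                  · -- y in row i+1 : contradiction via column direction
                    have hcein : c einner = false := by
                      cases hce : c einner
                      · rfl
                      exfalso
                      have hlt2 := col_lt_true hg hce (i := z.1) (i' := y.1) (j := einner)
                        (by rw [Fin.lt_def]; omega)
                      have hy' : (y.1, einner) = y := by
                        rw [hye]; exact Prod.ext rfl hb1'.symm
                      rw [hy', Fin.lt_def, hyval] at hlt2
                      omega
                    obtain ⟨yim, hyimv⟩ : ∃ e : Fin n, e.val = i' := ⟨⟨i', by omega⟩, rfl⟩
                    have hlt3 := col_lt_false hg hcein (i := yim) (i' := z.1) (j := einner)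
                      (by rw [Fin.lt_def]; omega)
                    rw [Fin.lt_def] at hlt3
                    have hbvy : bval n (yim, einner) ≤ i' * n + (n - 1) := by
                      show yim.val * n + (if Even yim.val then einner.val else n - 1 - einner.val)
                          ≤ i' * n + (n - 1)
                      rw [hyimv]
                      split <;> omega
                    have := hvv (yim, einner) (by omega)
                    omega
            · -- m ≥ 1 : x deviates downward in mid-row
              rcases Nat.even_or_odd i with hpar | hpar
              · -- even : forward is column m+1, backward is m-1
                rw [if_pos hpar] at hx2
                obtain ⟨fwd, hfv⟩ : ∃ e : Fin n, e.val = m + 1 := ⟨⟨m + 1, hmid⟩, rfl⟩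
                obtain ⟨bwd, hbv⟩ : ∃ e : Fin n, e.val = m - 1 := ⟨⟨m - 1, by omega⟩, rfl⟩
                have hfbig : k < (g (x.1, fwd)).val :=
                  hrowbig (x.1, fwd) (by show i < x.1.val; omega)
                have hfne : (g (x.1, fwd)).val ≠ k + 1 := by
                  intro he
                  have he2 : g (x.1, fwd) = g x := Fin.val_injective (by rw [he, hxval])
                  have he3 : fwd.val = x.2.val := congrArg (fun p => p.2.val) (hg.1.1 he2)
                  omega
                have hrx : r x.1 = true := by
                  refine (row_rel hg (i := x.1) (j := x.2) (j' := fwd)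
                    (by rw [Fin.lt_def]; omega)).mp ?_
                  rw [← hxe, Fin.lt_def, hxval]
                  omega
                have hbk := row_lt_true hg hrx (i := x.1) (j := bwd) (j' := x.2)
                  (by rw [Fin.lt_def]; omega)
                rw [← hxe, Fin.lt_def, hxval] at hbk
                have := hrowbig (x.1, bwd) (by show i < x.1.val; omega)
                omega
              · -- odd : forward is column n-2-m, backward is n-m
                have hnodd : ¬ Even i := Nat.not_even_iff_odd.mpr hpar
                rw [if_neg hnodd] at hx2
                obtain ⟨fwd, hfv⟩ : ∃ e : Fin n, e.val = n - 2 - m :=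
                  ⟨⟨n - 2 - m, by omega⟩, rfl⟩
                obtain ⟨bwd, hbv⟩ : ∃ e : Fin n, e.val = n - m := ⟨⟨n - m, by omega⟩, rfl⟩
                have hfbig : k < (g (x.1, fwd)).val :=
                  hrowbig (x.1, fwd) (by show i < x.1.val; omega)
                have hfne : (g (x.1, fwd)).val ≠ k + 1 := by
                  intro he
                  have he2 : g (x.1, fwd) = g x := Fin.val_injective (by rw [he, hxval])
                  have he3 : fwd.val = x.2.val := congrArg (fun p => p.2.val) (hg.1.1 he2)
                  omega
                have hrx : r x.1 = false := by
                  cases hre : r x.1 with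
                  | false => rfl
                  | true =>
                    exfalso
                    have hlt2 := row_lt_true hg hre (i := x.1) (j := fwd) (j' := x.2)
                      (by rw [Fin.lt_def]; omega)
                    rw [← hxe, Fin.lt_def, hxval] at hlt2
                    omega
                have hbk := row_lt_false hg hrx (i := x.1) (j := x.2) (j' := bwd)
                  (by rw [Fin.lt_def]; omega)
                rw [← hxe, Fin.lt_def, hxval] at hbk
                have := hrowbig (x.1, bwd) (by show i < x.1.val; omega)
                omega
          · -- x in row i-1 : visited
            exfalso
            rw [hz1] at hup
            obtain ⟨i', rfl⟩ : ∃ i', i = i' + 1 := ⟨i - 1, by omega⟩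
            have hx1 : x.1.val = i' := by omega
            have hsm : (i' + 1) * n = i' * n + n := Nat.succ_mul i' n
            have hbv : bval n x ≤ i' * n + (n - 1) := by
              unfold bval
              rw [hx1]
              have := x.2.isLt
              split <;> omega
            have := hvv x (by omega)
            omega
      · -- end of row : m = n - 1
        have hmend : m = n - 1 := by omega
        have hi1 : i + 1 < n := by
          by_contra hcon
          have h7 : i = n - 1 := by omega
          rw [h7] at hdm
          have hsm : (n - 1) * n = n * n - n := by rw [Nat.sub_mul, one_mul]
          have h5 : n ≤ n * n := Nat.le_mul_of_pos_left n (by omega)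
          omega
        have hsm : (i + 1) * n = i * n + n := Nat.succ_mul i n
        have htar : (k + 1) / n = i + 1 ∧ (k + 1) % n = 0 := by
          have h5 := divmod_mk (n := n) (i := i + 1) (t := 0) hn0 hn0
          rw [show (i + 1) * n + 0 = k + 1 by omega] at h5
          exact h5
        rcases hch with ⟨hr1, hr2⟩ | ⟨hc1, hc2⟩
        · -- same row : always visited/impossible
          exfalso
          have hx1 : x.1.val = i := by rw [← hr1, hz1]
          rcases hr2 with hfwd | hbwd
          · rw [hz2] at hfwd
            rcases Nat.even_or_odd i with hpar | hpar
            · rw [if_pos hpar] at hfwd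
              have := x.2.isLt
              omega
            · rw [if_neg (Nat.not_even_iff_odd.mpr hpar)] at hfwd
              have hbv : bval n x = i * n + (n - 2) := by
                unfold bval
                rw [hx1, if_neg (Nat.not_even_iff_odd.mpr hpar)]
                omega
              have := hvv x (by omega)
              omega
          · rw [hz2] at hbwd
            rcases Nat.even_or_odd i with hpar | hpar
            · rw [if_pos hpar] at hbwd
              have hbv : bval n x = i * n + (n - 2) := by
                unfold bval
                rw [hx1, if_pos hpar]
                omega
              have := hvv x (by omega)
              omega
            · rw [if_neg (Nat.not_even_iff_odd.mpr hpar)] at hbwd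
              omega
        · -- same column
          have hx2 : x.2.val = (if Even i then m else n - 1 - m) := by rw [← hc1, hz2]
          rcases hc2 with hdown | hup
          · -- target : next row
            rw [hz1] at hdown
            apply Prod.ext <;> apply Fin.ext
            · rw [bcell_fst, htar.1]; exact hdown
            · rw [bcell_snd, htar.1, htar.2]
              rcases Nat.even_or_odd i with hpar | hpar
              · rw [if_neg (by rw [Nat.even_add_one]; exact fun h => h hpar)]
                rw [if_pos hpar] at hx2
                omega
              · rw [if_pos (Nat.even_add_one.mpr (Nat.not_even_iff_odd.mpr hpar))]
                rw [if_neg (Nat.not_even_iff_odd.mpr hpar)] at hx2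
                omega
          · -- visited row i-1
            exfalso
            rw [hz1] at hup
            obtain ⟨i', rfl⟩ : ∃ i', i = i' + 1 := ⟨i - 1, by omega⟩
            have hx1 : x.1.val = i' := by omega
            have hsm' : (i' + 1) * n = i' * n + n := Nat.succ_mul i' n
            have hbv : bval n x ≤ i' * n + (n - 1) := by
              unfold bval
              rw [hx1]
              have := x.2.isLt
              split <;> omega
            have := hvv x (by omega)
            omega

lemma labels_of_snake (hn : 2 ≤ n)
    (hu : ∃! g' : Fin n × Fin n → Fin (n ^ 2), IsSolution n r c g')
    (hg : IsSolution n r c g)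
    (h00 : (g (⟨0, by omega⟩, ⟨0, by omega⟩)).val = 0)
    (h01 : (g (⟨0, by omega⟩, ⟨1, by omega⟩)).val = 1) :
    (∀ j, c j = true) ∧ (∀ i : Fin n, ∀ hi : i.val + 1 < n, r i ≠ r ⟨i.val + 1, hi⟩) := by
  have hn0 : 0 < n := by omega
  have key := snake_key hn hu hg h00 h01
  have gval : ∀ z : Fin n × Fin n, (g z).val = bval n z := by
    intro z
    have h1 := bval_lt (n := n) z
    have h2 := key (bval n z) h1
    rw [bcell_bval z h1] at h2
    exact h2
  have hract : ∀ a : Fin n, (r a = true ↔ Even a.val) := by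
    intro a
    have hiff := row_rel hg (i := a) (j := ⟨0, hn0⟩) (j' := ⟨1, by omega⟩)
      (by rw [Fin.lt_def]; show 0 < 1; omega)
    rw [Fin.lt_def, gval (a, ⟨0, hn0⟩), gval (a, ⟨1, by omega⟩)] at hiff
    rcases Nat.even_or_odd a.val with hp | hp
    · have e0 : bval n (a, (⟨0, hn0⟩ : Fin n)) = a.val * n + 0 := by
        show a.val * n + (if Even a.val then 0 else n - 1 - 0) = a.val * n + 0
        rw [if_pos hp]
      have e1 : bval n (a, (⟨1, show 1 < n by omega⟩ : Fin n)) = a.val * n + 1 := by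
        show a.val * n + (if Even a.val then 1 else n - 1 - 1) = a.val * n + 1
        rw [if_pos hp]
      rw [e0, e1] at hiff
      exact ⟨fun _ => hp, fun _ => hiff.mp (by omega)⟩
    · have hnp : ¬ Even a.val := Nat.not_even_iff_odd.mpr hp
      have e0 : bval n (a, (⟨0, hn0⟩ : Fin n)) = a.val * n + (n - 1) := by
        show a.val * n + (if Even a.val then 0 else n - 1 - 0) = a.val * n + (n - 1)
        rw [if_neg hnp]
        omega
      have e1 : bval n (a, (⟨1, show 1 < n by omega⟩ : Fin n)) = a.val * n + (n - 2) := by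
        show a.val * n + (if Even a.val then 1 else n - 1 - 1) = a.val * n + (n - 2)
        rw [if_neg hnp]
        omega
      rw [e0, e1] at hiff
      have hfalse : r a = false := by
        cases hb : r a with
        | false => rfl
        | true => exact absurd (hiff.mpr hb) (by omega)
      exact ⟨fun h => absurd h (by rw [hfalse]; simp), fun h => absurd h hnp⟩
  constructor
  · intro j
    have hlt : g ((⟨0, hn0⟩ : Fin n), j) < g ((⟨1, show 1 < n by omega⟩ : Fin n), j) := by
      rw [Fin.lt_def, gval, gval]
      show (0 * n + if Even (0 : ℕ) then j.val else n - 1 - j.val)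
          < (1 * n + if Even (1 : ℕ) then j.val else n - 1 - j.val)
      rw [if_pos (Even.zero), if_neg (Nat.not_even_one)]
      have := j.isLt
      omega
    exact (col_rel hg (by rw [Fin.lt_def]; show 0 < 1; omega)).mp hlt
  · intro i hi hcon
    rcases Nat.even_or_odd i.val with hp | hp
    · have h1 : r i = true := (hract i).mpr hp
      have h2 : Even ((⟨i.val + 1, hi⟩ : Fin n)).val := (hract _).mp (by rw [← hcon]; exact h1)
      have h3 : Even (i.val + 1) := h2
      exact (Nat.even_add_one.mp h3) hp
    · have h1 : r (⟨i.val + 1, hi⟩ : Fin n) = true :=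
        (hract _).mpr (Nat.even_add_one.mpr (Nat.not_even_iff_odd.mpr hp))
      have h2 : Even i.val := (hract i).mp (by rw [hcon]; exact h1)
      exact (Nat.not_even_iff_odd.mpr hp) h2

/-- the target condition -/
def Cond (n : ℕ) (r c : Fin n → Bool) : Prop :=
  ((∃ b : Bool, ∀ i, r i = b) ∧
    (∀ j : Fin n, ∀ hj : j.val + 1 < n, c j ≠ c ⟨j.val + 1, hj⟩)) ∨
  ((∃ b : Bool, ∀ j, c j = b) ∧
    (∀ i : Fin n, ∀ hi : i.val + 1 < n, r i ≠ r ⟨i.val + 1, hi⟩))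

lemma eu_transpose (hu : ∃! g' : Fin n × Fin n → Fin (n ^ 2), IsSolution n r c g') :
    ∃! g' : Fin n × Fin n → Fin (n ^ 2), IsSolution n c r g' :=
  existsUnique_transfer (fun G => fun p => G (p.2, p.1)) (fun _ => funext fun _ => rfl)
    (fun _ ha => sol_transpose ha) (fun _ ha => sol_transpose ha) hu

lemma eu_rowflip (hu : ∃! g' : Fin n × Fin n → Fin (n ^ 2), IsSolution n r c g') :
    ∃! g' : Fin n × Fin n → Fin (n ^ 2),
      IsSolution n (fun i => r i.rev) (fun j => !(c j)) g' := by
  refine existsUnique_transfer (fun G => fun p => G (p.1.rev, p.2)) ?_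
    (fun _ ha => sol_rowflip ha) ?_ hu
  · intro G
    funext p
    simp [Fin.rev_rev]
  · intro G hG
    exact sol_congr (fun i => by rw [Fin.rev_rev]) (fun j => Bool.not_not _)
      (sol_rowflip hG)

lemma eu_colflip (hu : ∃! g' : Fin n × Fin n → Fin (n ^ 2), IsSolution n r c g') :
    ∃! g' : Fin n × Fin n → Fin (n ^ 2),
      IsSolution n (fun i => !(r i)) (fun j => c j.rev) g' := by
  refine existsUnique_transfer (fun G => fun p => G (p.1, p.2.rev)) ?_
    (fun _ ha => sol_colflip ha) ?_ hu
  · intro G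
    funext p
    simp [Fin.rev_rev]
  · intro G hG
    exact sol_congr (fun i => Bool.not_not _) (fun j => by rw [Fin.rev_rev])
      (sol_colflip hG)

lemma eu_flip (hu : ∃! g' : Fin n × Fin n → Fin (n ^ 2), IsSolution n r c g') :
    ∃! g' : Fin n × Fin n → Fin (n ^ 2),
      IsSolution n (fun i => !(r i)) (fun j => !(c j)) g' := by
  refine existsUnique_transfer (fun G => fun p => (G p).rev) ?_
    (fun _ ha => sol_flip ha) ?_ hu
  · intro G
    funext p
    simp [Fin.rev_rev]
  · intro G hG
    exact sol_congr (fun i => Bool.not_not _) (fun j => Bool.not_not _) (sol_flip hG)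

lemma cond_rowflip (h : Cond n (fun i => r i.rev) (fun j => !(c j))) : Cond n r c := by
  rcases h with ⟨⟨b, hb⟩, hc⟩ | ⟨⟨b, hb⟩, hr⟩
  · left
    constructor
    · exact ⟨b, fun i => by
        have := hb i.rev
        simp only [Fin.rev_rev] at this
        exact this⟩
    · exact fun j hj he => hc j hj (by simp only []; rw [he])
  · right
    constructor
    · refine ⟨!b, fun j => ?_⟩
      have := hb j
      simp only [] at this
      rw [← this, Bool.not_not]
    · intro i hi he
      have hv : i.val + 1 ≤ n - 1 := by omega
      have hj' : (n - 2 - i.val) + 1 < n := by omega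
      have e1 : (⟨n - 2 - i.val, by omega⟩ : Fin n).rev = ⟨i.val + 1, hi⟩ := by
        apply Fin.ext
        rw [Fin.val_rev]
        show n - (n - 2 - i.val + 1) = i.val + 1
        omega
      have e2 : (⟨(n - 2 - i.val) + 1, hj'⟩ : Fin n).rev = i := by
        apply Fin.ext
        rw [Fin.val_rev]
        show n - (n - 2 - i.val + 1 + 1) = i.val
        omega
      have := hr ⟨n - 2 - i.val, by omega⟩ hj'
      simp only [] at this
      rw [e1, e2] at this
      exact this he.symm

lemma cond_colflip (h : Cond n (fun i => !(r i)) (fun j => c j.rev)) : Cond n r c := by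
  rcases h with ⟨⟨b, hb⟩, hc⟩ | ⟨⟨b, hb⟩, hr⟩
  · left
    constructor
    · refine ⟨!b, fun i => ?_⟩
      have := hb i
      simp only [] at this
      rw [← this, Bool.not_not]
    · intro j hj he
      have hj' : (n - 2 - j.val) + 1 < n := by omega
      have e1 : (⟨n - 2 - j.val, by omega⟩ : Fin n).rev = ⟨j.val + 1, hj⟩ := by
        apply Fin.ext
        rw [Fin.val_rev]
        show n - (n - 2 - j.val + 1) = j.val + 1
        omega
      have e2 : (⟨(n - 2 - j.val) + 1, hj'⟩ : Fin n).rev = j := by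
        apply Fin.ext
        rw [Fin.val_rev]
        show n - (n - 2 - j.val + 1 + 1) = j.val
        omega
      have := hc ⟨n - 2 - j.val, by omega⟩ hj'
      simp only [] at this
      rw [e1, e2] at this
      exact this he.symm
  · right
    constructor
    · exact ⟨b, fun j => by
        have := hb j.rev
        simp only [Fin.rev_rev] at this
        exact this⟩
    · exact fun i hi he => hr i hi (by simp only []; rw [he])

lemma corner_case (hn : 2 ≤ n)
    (hu : ∃! g' : Fin n × Fin n → Fin (n ^ 2), IsSolution n r c g')
    (hg : IsSolution n r c g)
    (h00 : (g (⟨0, by omega⟩, ⟨0, by omega⟩)).val = 0) : Cond n r c := by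
  have hn0 : 0 < n := by omega
  have hnn : 1 < n ^ 2 := by
    have : n ^ 2 = n * n := sq n
    have : 2 * 2 ≤ n * n := Nat.mul_le_mul hn hn
    omega
  obtain ⟨x1, hx1⟩ := hg.1.2 ⟨1, hnn⟩
  have hx1v : (g x1).val = 1 := by rw [hx1]
  have hch := chain_of_unique hu hg
    (x := ((⟨0, hn0⟩ : Fin n), (⟨0, hn0⟩ : Fin n))) (y := x1) (by rw [hx1v, h00])
  rcases hch with ⟨ha1, ha2⟩ | ⟨hb1, hb2⟩
  · -- value 1 to the right of the corner
    have ha1' : (⟨0, hn0⟩ : Fin n) = x1.1 := ha1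
    have ha2' : x1.2.val = 0 + 1 ∨ (0 : ℕ) = x1.2.val + 1 := ha2
    have hx1e : x1 = (⟨0, hn0⟩, ⟨1, by omega⟩) := by
      apply Prod.ext
      · exact ha1'.symm
      · exact Fin.ext (show x1.2.val = 1 by omega)
    have h01 : (g (⟨0, by omega⟩, ⟨1, by omega⟩)).val = 1 := by
      rw [← hx1e]
      exact hx1v
    have := labels_of_snake hn hu hg h00 h01
    exact Or.inr ⟨⟨true, this.1⟩, this.2⟩
  · -- value 1 below the corner : transpose
    have hb1' : (⟨0, hn0⟩ : Fin n) = x1.2 := hb1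
    have hb2' : x1.1.val = 0 + 1 ∨ (0 : ℕ) = x1.1.val + 1 := hb2
    have hx1e : x1 = (⟨1, by omega⟩, ⟨0, hn0⟩) := by
      apply Prod.ext
      · exact Fin.ext (show x1.1.val = 1 by omega)
      · exact hb1'.symm
    have hu' := eu_transpose hu
    have hg' := sol_transpose hg
    have h00' : ((fun p : Fin n × Fin n => g (p.2, p.1)) (⟨0, by omega⟩, ⟨0, by omega⟩)).val
        = 0 := h00
    have h01' : ((fun p : Fin n × Fin n => g (p.2, p.1)) (⟨0, by omega⟩, ⟨1, by omega⟩)).val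
        = 1 := by
      show (g (⟨1, by omega⟩, ⟨0, by omega⟩)).val = 1
      rw [← hx1e]
      exact hx1v
    have := labels_of_snake hn hu' hg' h00' h01'
    exact Or.inl ⟨⟨true, this.1⟩, this.2⟩

lemma corner_loc (hn : 2 ≤ n) (hg : IsSolution n r c g) {x0 : Fin n × Fin n}
    (h0 : (g x0).val = 0) :
    (x0.1.val = 0 ∨ x0.1.val = n - 1) ∧ (x0.2.val = 0 ∨ x0.2.val = n - 1) := by
  have hx0e : x0 = (x0.1, x0.2) := rfl
  constructor
  · cases hcx : c x0.2 with
    | true =>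
      left
      by_contra hne
      have h1 : ((⟨0, by omega⟩ : Fin n)) < x0.1 := by
        rw [Fin.lt_def]; show 0 < x0.1.val; omega
      have hlt := col_lt_true hg hcx (i := ⟨0, by omega⟩) (i' := x0.1) (j := x0.2) h1
      rw [← hx0e, Fin.lt_def, h0] at hlt
      omega
    | false =>
      right
      by_contra hne
      have h2 := x0.1.isLt
      have h1 : x0.1 < (⟨n - 1, by omega⟩ : Fin n) := by
        rw [Fin.lt_def]; show x0.1.val < n - 1; omega
      have hlt := col_lt_false hg hcx (i := x0.1) (i' := ⟨n - 1, by omega⟩) (j := x0.2) h1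
      rw [← hx0e, Fin.lt_def, h0] at hlt
      omega
  · cases hrx : r x0.1 with
    | true =>
      left
      by_contra hne
      have h1 : ((⟨0, by omega⟩ : Fin n)) < x0.2 := by
        rw [Fin.lt_def]; show 0 < x0.2.val; omega
      have hlt := row_lt_true hg hrx (j := ⟨0, by omega⟩) (j' := x0.2) h1
      rw [← hx0e, Fin.lt_def, h0] at hlt
      omega
    | false =>
      right
      by_contra hne
      have h2 := x0.2.isLt
      have h1 : x0.2 < (⟨n - 1, by omega⟩ : Fin n) := by
        rw [Fin.lt_def]; show x0.2.val < n - 1; omega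
      have hlt := row_lt_false hg hrx (j := x0.2) (j' := ⟨n - 1, by omega⟩) h1
      rw [← hx0e, Fin.lt_def, h0] at hlt
      omega

lemma forward (hn : 2 ≤ n)
    (hu : ∃! g' : Fin n × Fin n → Fin (n ^ 2), IsSolution n r c g') : Cond n r c := by
  have hn0 : 0 < n := by omega
  obtain ⟨g, hg, -⟩ := id hu
  have hnn : 0 < n ^ 2 := by
    have h1 : n ^ 2 = n * n := sq n
    have h2 : 2 * 2 ≤ n * n := Nat.mul_le_mul hn hn
    omega
  obtain ⟨x0, hx0⟩ := hg.1.2 ⟨0, hnn⟩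
  have h0v : (g x0).val = 0 := by rw [hx0]
  obtain ⟨hc1, hc2⟩ := corner_loc hn hg h0v
  rcases hc1 with hr0 | hrN <;> rcases hc2 with hcc0 | hccN
  · -- corner (0,0)
    have hx0e : x0 = ((⟨0, hn0⟩ : Fin n), (⟨0, hn0⟩ : Fin n)) :=
      Prod.ext (Fin.ext hr0) (Fin.ext hcc0)
    exact corner_case hn hu hg (by rw [← hx0e]; exact h0v)
  · -- corner (0, n-1) : flip columns
    have hx0e : x0 = ((⟨0, hn0⟩ : Fin n), ((⟨0, hn0⟩ : Fin n)).rev) :=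
      Prod.ext (Fin.ext hr0) (Fin.ext (by rw [Fin.val_rev]; omega))
    apply cond_colflip
    refine corner_case hn (eu_colflip hu) (sol_colflip hg) ?_
    show (g ((⟨0, hn0⟩ : Fin n), ((⟨0, hn0⟩ : Fin n)).rev)).val = 0
    rw [← hx0e]
    exact h0v
  · -- corner (n-1, 0) : flip rows
    have hx0e : x0 = (((⟨0, hn0⟩ : Fin n)).rev, (⟨0, hn0⟩ : Fin n)) :=
      Prod.ext (Fin.ext (by rw [Fin.val_rev]; omega)) (Fin.ext hcc0)
    apply cond_rowflip
    refine corner_case hn (eu_rowflip hu) (sol_rowflip hg) ?_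
    show (g (((⟨0, hn0⟩ : Fin n)).rev, (⟨0, hn0⟩ : Fin n))).val = 0
    rw [← hx0e]
    exact h0v
  · -- corner (n-1, n-1) : flip both
    have hx0e : x0 = (((⟨0, hn0⟩ : Fin n)).rev, ((⟨0, hn0⟩ : Fin n)).rev) :=
      Prod.ext (Fin.ext (by rw [Fin.val_rev]; omega))
        (Fin.ext (by rw [Fin.val_rev]; omega))
    apply cond_rowflip
    apply cond_colflip (r := fun i => r i.rev) (c := fun j => !(c j))
    refine corner_case hn (eu_colflip (eu_rowflip hu)) (sol_colflip (sol_rowflip hg)) ?_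
    show (g (((⟨0, hn0⟩ : Fin n)).rev, ((⟨0, hn0⟩ : Fin n)).rev)).val = 0
    rw [← hx0e]
    exact h0v

lemma backward (hn : 2 ≤ n) (h : Cond n r c) :
    ∃! g' : Fin n × Fin n → Fin (n ^ 2), IsSolution n r c g' := by
  rcases h with ⟨⟨b, hb⟩, hc⟩ | ⟨⟨b, hb⟩, hr⟩
  · cases b with
    | true => exact existsUnique_of_rtrue_calt hb hc
    | false =>
      have h1 : ∃! g', IsSolution n (fun i => !(r i)) (fun j => !(c j)) g' :=
        existsUnique_of_rtrue_calt (fun i => by rw [hb i]; rfl)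
          (fun j hj he => hc j hj (by
            have := congrArg (fun x => !x) he
            simpa using this))
      have h2 := eu_flip h1
      simp only [Bool.not_not] at h2
      exact h2
  · have h1 : ∃! g', IsSolution n c r g' := by
      cases b with
      | true => exact existsUnique_of_rtrue_calt hb hr
      | false =>
        have h1 : ∃! g', IsSolution n (fun j => !(c j)) (fun i => !(r i)) g' :=
          existsUnique_of_rtrue_calt (fun j => by rw [hb j]; rfl)
            (fun i hi he => hr i hi (by
              have := congrArg (fun x => !x) he
              simpa using this))
        have h2 := eu_flip h1
        simp only [Bool.not_not] at h2
        exact h2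
    exact eu_transpose h1

end SMP


/-- A sorting match puzzle of order `n ≥ 2` has a unique solution iff one side
is uniform and the other alternates. -/
theorem unique_solution_iff (n : ℕ) (hn : 2 ≤ n) (r c : Fin n → Bool) :
    (∃! g : Fin n × Fin n → Fin (n ^ 2), IsSolution n r c g) ↔
      ((∃ b : Bool, ∀ i, r i = b) ∧
        (∀ j : Fin n, ∀ hj : j.val + 1 < n, c j ≠ c ⟨j.val + 1, hj⟩)) ∨
      ((∃ b : Bool, ∀ j, c j = b) ∧
        (∀ i : Fin n, ∀ hi : i.val + 1 < n, r i ≠ r ⟨i.val + 1, hi⟩)) :=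
  ⟨fun hu => SMP.forward hn hu, fun h => SMP.backward hn h⟩
end

section
/- For any sorting match puzzle (r, c) of order n ≥ 2, the minimum over all solvable puzzles (r*, c*) of the total Hamming distance ‖r,r*‖ + ‖c,c*‖ equals the minimum of the four quantities: min(totalA(r), n − totalA(r)); min(totalA(c), n − totalA(c)); min_k d(r, A^k D^{n−k}) + min_ℓ d(c, A^ℓ D^{n−ℓ}); and min_k d(r, D^k A^{n−k}) + min_ℓ d(c, D^ℓ A^{n−ℓ}), where k, ℓ range over 0,…,n. -/
open Finset

/-- Hamming distance between two label strings. -/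
def hamming (n : ℕ) (s t : Fin n → Bool) : ℕ :=
  (univ.filter fun i : Fin n => s i ≠ t i).card

/-- Number of `A` labels in a string. -/
def totalA (n : ℕ) (s : Fin n → Bool) : ℕ :=
  (univ.filter fun i : Fin n => s i = true).card

/-!
A solvable puzzle has a constant row or column string, or both strings of the form
`A^k D^(n-k)`, or both of the form `D^k A^(n-k)`: rows `i₁ < i₂` labelled `A, D` together with
columns `j₁ < j₂` labelled `D, A` would make the four entries at their crossings increase around
a cycle. Conversely each of these four families is solved by ranking an explicit injective key.
So the nearest solvable puzzle lies in one of the families, and within a family the row and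
column distances are minimised independently.
-/

open Function

section

variable {n : ℕ}

/-- `A^k D^(n-k)`. -/
def prefixA (n k : ℕ) : Fin n → Bool := fun i => decide (i.val < k)

/-- `D^k A^(n-k)`. -/
def suffixA (n k : ℕ) : Fin n → Bool := fun i => decide (k ≤ i.val)

lemma not_prefixA (k : ℕ) : (fun i => !prefixA n k i) = suffixA n k :=
  funext fun i => by simp only [prefixA, suffixA, ← decide_not, not_lt]

lemma strictMono_or_strictAnti_of_lt_iff {α β : Type*} [LinearOrder α] [LinearOrder β]
    {f : α → β} (hf : Injective f) {b : Bool}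
    (h : ∀ x y, x < y → (f x < f y ↔ b = true)) :
    if b = true then StrictMono f else StrictAnti f := by
  split_ifs with hb
  · exact fun x y hxy => (h x y hxy).2 hb
  · exact fun x y hxy =>
      (not_lt.1 fun hlt => hb ((h x y hxy).1 hlt)).lt_of_ne' (hf.ne hxy.ne)

lemma solvable_of_injective {α : Type*} [LinearOrder α] {r c : Fin n → Bool}
    (K : Fin n × Fin n → α) (hK : Injective K)
    (hrow : ∀ i j j', j < j' → (K (i, j) < K (i, j') ↔ r i = true))
    (hcol : ∀ i i' j, i < i' → (K (i, j) < K (i', j) ↔ c j = true)) :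
    Solvable n r c := by
  classical
  have hcard : (univ.image K).card = n ^ 2 := by
    rw [card_image_of_injective _ hK, card_univ, Fintype.card_prod, Fintype.card_fin, sq]
  let e := (univ.image K).orderIsoOfFin hcard
  let g : Fin n × Fin n → Fin (n ^ 2) := fun p =>
    e.symm ⟨K p, mem_image_of_mem K (mem_univ p)⟩
  have hg : ∀ p q, g p < g q ↔ K p < K q := fun p q => e.symm.lt_iff_lt.trans Subtype.mk_lt_mk
  have hg_inj : Injective g := fun p q hpq => hK <|
    le_antisymm (not_lt.1 fun h => ((hg q p).2 h).ne' hpq) (not_lt.1 fun h => ((hg p q).2 h).ne hpq)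
  refine ⟨g, (Fintype.bijective_iff_injective_and_card g).2 ⟨hg_inj, by simp [sq]⟩,
    fun i => ?_, fun j => ?_⟩
  · exact strictMono_or_strictAnti_of_lt_iff (hg_inj.comp (Prod.mk_right_injective i))
      fun j j' h => (hg _ _).trans (hrow i j j' h)
  · exact strictMono_or_strictAnti_of_lt_iff (hg_inj.comp (Prod.mk_left_injective j))
      fun i i' h => (hg _ _).trans (hcol i i' j h)

lemma solvable_const_left (b : Bool) (c : Fin n → Bool) : Solvable n (fun _ => b) c := by
  let σ : Bool → ℤ := fun b => if b then 1 else -1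
  refine solvable_of_injective (fun p => toLex (σ b * p.2, σ (c p.2) * p.1)) ?_ ?_ ?_
  · rintro ⟨i, j⟩ ⟨i', j'⟩ h
    simp only [toLex_inj, Prod.mk.injEq] at h
    cases b <;> cases hc : c j <;> cases hc' : c j' <;> simp_all [σ, Fin.ext_iff]
  · intro i j j' h
    rw [Fin.lt_def] at h
    cases b <;> simp [σ, Prod.Lex.toLex_lt_toLex] <;> omega
  · intro i i' j h
    rw [Fin.lt_def] at h
    cases c j <;> simp [σ, Prod.Lex.toLex_lt_toLex] <;> omega

/-- The key `(2k - 2i - 1)(2j - 2l + 1)` is a saddle whose sign pattern matches the labels;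
the row index breaks ties. -/
lemma solvable_prefixA (k l : ℕ) : Solvable n (prefixA n k) (prefixA n l) := by
  refine solvable_of_injective
    (fun p => toLex ((2 * k - 2 * p.1 - 1 : ℤ) * (2 * p.2 - 2 * l + 1), (p.1 : ℤ))) ?_ ?_ ?_
  · rintro ⟨i, j⟩ ⟨i', j'⟩ h
    simp only [toLex_inj, Prod.mk.injEq, Nat.cast_inj, Fin.val_inj] at h
    obtain ⟨h, rfl⟩ := h
    have := mul_left_cancel₀ (by omega : (2 * k - 2 * i - 1 : ℤ) ≠ 0) h
    simp only [Prod.mk.injEq, true_and, Fin.ext_iff]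
    omega
  · intro i j j' h
    rw [Fin.lt_def] at h
    simp only [Prod.Lex.toLex_lt_toLex, lt_self_iff_false, and_false, or_false, prefixA,
      decide_eq_true_eq]
    constructor
    · intro hlt
      by_contra hik
      nlinarith
    · intro hik
      nlinarith
  · intro i i' j h
    rw [Fin.lt_def] at h
    simp only [Prod.Lex.toLex_lt_toLex, prefixA, decide_eq_true_eq]
    constructor
    · rintro (hlt | ⟨heq, -⟩) <;> by_contra hjl <;> nlinarith
    · intro hjl
      left
      nlinarith

namespace Solvable

variable {r c : Fin n → Bool}

lemma swap (h : Solvable n r c) : Solvable n c r := by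
  obtain ⟨g, hbij, hr, hc⟩ := h
  exact ⟨g ∘ Prod.swap, hbij.comp Prod.swap_bijective, hc, hr⟩

lemma not (h : Solvable n r c) : Solvable n (fun i => !r i) (fun j => !c j) := by
  obtain ⟨g, hbij, hr, hc⟩ := h
  refine ⟨Fin.rev ∘ g, Fin.revPerm.bijective.comp hbij, fun i => ?_, fun j => ?_⟩
  · have := hr i
    cases hri : r i <;> simp only [hri, Bool.not_false, Bool.not_true, Bool.false_eq_true,
      ↓reduceIte] at this ⊢
    exacts [Fin.rev_strictAnti.comp this, Fin.rev_strictAnti.comp_strictMono this]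
  · have := hc j
    cases hcj : c j <;> simp only [hcj, Bool.not_false, Bool.not_true, Bool.false_eq_true,
      ↓reduceIte] at this ⊢
    exacts [Fin.rev_strictAnti.comp this, Fin.rev_strictAnti.comp_strictMono this]

end Solvable

lemma solvable_suffixA (k l : ℕ) : Solvable n (suffixA n k) (suffixA n l) :=
  not_prefixA k ▸ not_prefixA l ▸ (solvable_prefixA k l).not

lemma exists_lt_of_not_monotone {s : Fin n → Bool} (hs : ¬Monotone s) :
    ∃ i i', i < i' ∧ s i = true ∧ s i' = false := by
  simp only [monotone_iff_forall_lt, not_forall, not_le, Bool.lt_iff] at hs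
  obtain ⟨i, i', h, hi', hi⟩ := hs
  exact ⟨i, i', h, hi, hi'⟩

lemma exists_lt_of_not_antitone {s : Fin n → Bool} (hs : ¬Antitone s) :
    ∃ i i', i < i' ∧ s i = false ∧ s i' = true := by
  simpa only [antitone_iff_forall_lt, not_forall, not_le, Bool.lt_iff, exists_prop] using hs

/-- With `false < true`, `Monotone s` says that no `A` precedes a `D` and `Antitone s` that no
`D` precedes an `A`. A row string with `A` before `D` and a column string with `D` before `A`
would force the four entries at their crossings to increase around a cycle. -/
lemma Solvable.monotone_or_antitone {r c : Fin n → Bool} (h : Solvable n r c) :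
    Monotone r ∨ Antitone c := by
  by_contra! hne
  obtain ⟨i₁, i₂, hi, hr₁, hr₂⟩ := exists_lt_of_not_monotone hne.1
  obtain ⟨j₁, j₂, hj, hc₁, hc₂⟩ := exists_lt_of_not_antitone hne.2
  obtain ⟨g, -, hr, hc⟩ := h
  have h₁ : g (i₁, j₁) < g (i₁, j₂) :=
    (by simpa [hr₁] using hr i₁ : StrictMono fun j => g (i₁, j)) hj
  have h₂ : g (i₁, j₂) < g (i₂, j₂) :=
    (by simpa [hc₂] using hc j₂ : StrictMono fun i => g (i, j₂)) hi
  have h₃ : g (i₂, j₂) < g (i₂, j₁) :=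
    (by simpa [hr₂] using hr i₂ : StrictAnti fun j => g (i₂, j)) hj
  have h₄ : g (i₂, j₁) < g (i₁, j₁) :=
    (by simpa [hc₁] using hc j₁ : StrictAnti fun i => g (i, j₁)) hi
  exact lt_irrefl _ (h₁.trans (h₂.trans (h₃.trans h₄)))

lemma totalA_le (s : Fin n → Bool) : totalA n s ≤ n :=
  (card_filter_le _ _).trans_eq (card_fin n)

lemma Antitone.eq_prefixA {s : Fin n → Bool} (hs : Antitone s) :
    s = prefixA n (totalA n s) := by
  funext i
  rw [prefixA, Bool.eq_iff_iff, decide_eq_true_iff]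
  constructor
  · intro hi
    have : Iic i ⊆ univ.filter fun j => s j = true := fun j hj => by
      simpa [Bool.le_iff_imp, hi] using hs (mem_Iic.1 hj)
    simpa [totalA] using card_le_card this
  · intro hi
    by_contra hsi
    have : (univ.filter fun j => s j = true) ⊆ Iio i := fun j hj => by
      simp only [mem_filter, mem_univ, true_and] at hj
      exact mem_Iio.2 (lt_of_not_ge fun hij => hsi (by simpa [Bool.le_iff_imp, hj] using hs hij))
    have := card_le_card this
    simp only [Fin.card_Iio] at this
    exact absurd hi (not_lt.2 this)

lemma Antitone.exists_eq_prefixA {s : Fin n → Bool} (hs : Antitone s) :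
    ∃ k : Fin (n + 1), s = prefixA n k :=
  ⟨⟨totalA n s, Nat.lt_succ_of_le (totalA_le s)⟩, hs.eq_prefixA⟩

lemma Monotone.exists_eq_suffixA {s : Fin n → Bool} (hs : Monotone s) :
    ∃ k : Fin (n + 1), s = suffixA n k := by
  have hs' : Antitone fun i => !s i := fun i j hij =>
    Bool.le_iff_imp.2 fun h => by simpa using mt (Bool.le_iff_imp.1 (hs hij)) (by simpa using h)
  obtain ⟨k, hk⟩ := hs'.exists_eq_prefixA
  exact ⟨k, by rw [← not_prefixA, ← hk]; simp⟩

lemma exists_eq_const_of_monotone_of_antitone {s : Fin n → Bool} (hm : Monotone s)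
    (ha : Antitone s) : ∃ b, s = fun _ => b := by
  cases n with
  | zero => exact ⟨true, funext fun i => i.elim0⟩
  | succ n => exact ⟨s 0, funext fun i => le_antisymm (ha (Fin.zero_le i)) (hm (Fin.zero_le i))⟩

theorem solvable_iff {r c : Fin n → Bool} :
    Solvable n r c ↔ (∃ b, r = fun _ => b) ∨ (∃ b, c = fun _ => b) ∨
      (∃ k l : Fin (n + 1), r = prefixA n k ∧ c = prefixA n l) ∨
      (∃ k l : Fin (n + 1), r = suffixA n k ∧ c = suffixA n l) := by
  constructor
  · intro h
    by_cases hr : Monotone r ∧ Antitone r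
    · exact Or.inl (exists_eq_const_of_monotone_of_antitone hr.1 hr.2)
    by_cases hc : Monotone c ∧ Antitone c
    · exact Or.inr (Or.inl (exists_eq_const_of_monotone_of_antitone hc.1 hc.2))
    refine Or.inr (Or.inr ?_)
    rcases h.monotone_or_antitone with hr' | hc'
    · have hc' : Monotone c := h.swap.monotone_or_antitone.resolve_right fun ha => hr ⟨hr', ha⟩
      obtain ⟨k, rfl⟩ := hr'.exists_eq_suffixA
      obtain ⟨l, rfl⟩ := hc'.exists_eq_suffixA
      exact Or.inr ⟨k, l, rfl, rfl⟩
    · have hr' : Antitone r := h.swap.monotone_or_antitone.resolve_left fun hm => hc ⟨hm, hc'⟩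
      obtain ⟨k, rfl⟩ := hr'.exists_eq_prefixA
      obtain ⟨l, rfl⟩ := hc'.exists_eq_prefixA
      exact Or.inl ⟨k, l, rfl, rfl⟩
  · rintro (⟨b, rfl⟩ | ⟨b, rfl⟩ | ⟨k, l, rfl, rfl⟩ | ⟨k, l, rfl, rfl⟩)
    · exact solvable_const_left b c
    · exact (solvable_const_left b r).swap
    · exact solvable_prefixA k l
    · exact solvable_suffixA k l

lemma hamming_self (s : Fin n → Bool) : hamming n s s = 0 := by simp [hamming]

lemma hamming_const_false (s : Fin n → Bool) : hamming n s (fun _ => false) = totalA n s := by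
  simp [hamming, totalA]

lemma hamming_const_true (s : Fin n → Bool) : hamming n s (fun _ => true) = n - totalA n s := by
  have := card_filter_add_card_filter_not (s := univ) fun i : Fin n => s i = true
  rw [card_univ, Fintype.card_fin] at this
  rw [hamming, totalA]
  simp only [ne_eq]
  omega

def constDist (n : ℕ) (s : Fin n → Bool) : ℕ := min (totalA n s) (n - totalA n s)

noncomputable def prefixDist (n : ℕ) (s : Fin n → Bool) : ℕ :=
  ⨅ k : Fin (n + 1), hamming n s (prefixA n k)

noncomputable def suffixDist (n : ℕ) (s : Fin n → Bool) : ℕ :=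
  ⨅ k : Fin (n + 1), hamming n s (suffixA n k)

/-- The distance from `(r, c)` to the nearest puzzle in one of the families of `solvable_iff`. -/
noncomputable def familyDist (n : ℕ) (r c : Fin n → Bool) : ℕ :=
  min (min (constDist n r) (constDist n c))
    (min (prefixDist n r + prefixDist n c) (suffixDist n r + suffixDist n c))

lemma constDist_le_hamming (s : Fin n → Bool) (b : Bool) :
    constDist n s ≤ hamming n s (fun _ => b) := by
  cases b
  · exact hamming_const_false s ▸ min_le_left _ _
  · exact hamming_const_true s ▸ min_le_right _ _

lemma exists_hamming_const_eq_constDist (s : Fin n → Bool) :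
    ∃ b, hamming n s (fun _ => b) = constDist n s :=
  (min_choice (totalA n s) (n - totalA n s)).elim
    (fun h => ⟨false, by rw [hamming_const_false, constDist, h]⟩)
    (fun h => ⟨true, by rw [hamming_const_true, constDist, h]⟩)

lemma prefixDist_le_hamming (s : Fin n → Bool) (k : Fin (n + 1)) :
    prefixDist n s ≤ hamming n s (prefixA n k) :=
  ciInf_le (OrderBot.bddBelow _) k

lemma suffixDist_le_hamming (s : Fin n → Bool) (k : Fin (n + 1)) :
    suffixDist n s ≤ hamming n s (suffixA n k) :=
  ciInf_le (OrderBot.bddBelow _) k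

lemma familyDist_le_of_solvable (r c : Fin n → Bool) {r' c' : Fin n → Bool}
    (h : Solvable n r' c') : familyDist n r c ≤ hamming n r r' + hamming n c c' := by
  unfold familyDist
  rcases solvable_iff.1 h with ⟨b, rfl⟩ | ⟨b, rfl⟩ | ⟨k, l, rfl, rfl⟩ |
    ⟨k, l, rfl, rfl⟩
  · have := constDist_le_hamming r b
    omega
  · have := constDist_le_hamming c b
    omega
  · have := prefixDist_le_hamming r k
    have := prefixDist_le_hamming c l
    omega
  · have := suffixDist_le_hamming r k
    have := suffixDist_le_hamming c l
    omega

lemma exists_solvable_familyDist_eq (r c : Fin n → Bool) :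
    ∃ r' c', Solvable n r' c' ∧ familyDist n r c = hamming n r r' + hamming n c c' := by
  let P : ℕ → Prop := fun m =>
    ∃ r' c', Solvable n r' c' ∧ m = hamming n r r' + hamming n c c'
  have hmin : ∀ a b, P a → P b → P (min a b) := fun a b ha hb =>
    min_rec (fun _ => ha) (fun _ => hb)
  refine hmin _ _ (hmin _ _ ?_ ?_) (hmin _ _ ?_ ?_)
  · obtain ⟨b, hb⟩ := exists_hamming_const_eq_constDist r
    exact ⟨_, c, solvable_const_left b c, by rw [hb, hamming_self, add_zero]⟩
  · obtain ⟨b, hb⟩ := exists_hamming_const_eq_constDist c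
    exact ⟨r, _, (solvable_const_left b r).swap, by rw [hb, hamming_self, zero_add]⟩
  · obtain ⟨k, hk⟩ :=
      exists_eq_ciInf_of_finite (f := fun k : Fin (n + 1) => hamming n r (prefixA n k))
    obtain ⟨l, hl⟩ :=
      exists_eq_ciInf_of_finite (f := fun l : Fin (n + 1) => hamming n c (prefixA n l))
    exact ⟨_, _, solvable_prefixA k l, by rw [prefixDist, prefixDist, ← hk, ← hl]⟩
  · obtain ⟨k, hk⟩ :=
      exists_eq_ciInf_of_finite (f := fun k : Fin (n + 1) => hamming n r (suffixA n k))
    obtain ⟨l, hl⟩ :=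
      exists_eq_ciInf_of_finite (f := fun l : Fin (n + 1) => hamming n c (suffixA n l))
    exact ⟨_, _, solvable_suffixA k l, by rw [suffixDist, suffixDist, ← hk, ← hl]⟩

end

theorem nearest_solvable_general (n : ℕ) (r c : Fin n → Bool) :
    sInf {m : ℕ | ∃ r' c' : Fin n → Bool, Solvable n r' c' ∧
        m = hamming n r r' + hamming n c c'} =
      min (min (min (totalA n r) (n - totalA n r))
               (min (totalA n c) (n - totalA n c)))
          (min ((⨅ k : Fin (n + 1), hamming n r (fun i => decide (i.val < k.val))) +
                (⨅ ℓ : Fin (n + 1), hamming n c (fun j => decide (j.val < ℓ.val))))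
               ((⨅ k : Fin (n + 1), hamming n r (fun i => decide (k.val ≤ i.val))) +
                (⨅ ℓ : Fin (n + 1), hamming n c (fun j => decide (ℓ.val ≤ j.val))))) :=
  IsLeast.csInf_eq (a := familyDist n r c) ⟨exists_solvable_familyDist_eq r c,
    fun _ ⟨_, _, h, hm⟩ => hm ▸ familyDist_le_of_solvable r c h⟩

/-- The minimum number of label flips needed to reach a solvable puzzle equals
the minimum of the four natural candidate quantities. -/
theorem nearest_solvable (n : ℕ) (hn : 2 ≤ n) (r c : Fin n → Bool) :
    sInf {m : ℕ | ∃ r' c' : Fin n → Bool, Solvable n r' c' ∧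
        m = hamming n r r' + hamming n c c'} =
      min (min (min (totalA n r) (n - totalA n r))
               (min (totalA n c) (n - totalA n c)))
          (min ((⨅ k : Fin (n + 1), hamming n r (fun i => decide (i.val < k.val))) +
                (⨅ ℓ : Fin (n + 1), hamming n c (fun j => decide (j.val < ℓ.val))))
               ((⨅ k : Fin (n + 1), hamming n r (fun i => decide (k.val ≤ i.val))) +
                (⨅ ℓ : Fin (n + 1), hamming n c (fun j => decide (ℓ.val ≤ j.val))))) :=
  nearest_solvable_general n r c
end

section
/- A puzzle (r,c) of the sorting match puzzle, with r, c ∈ {A,D}^n and neither r nor c constant, is solvable only if both r and c have exactly one index where consecutive labels differ, and moreover the switch directions agree (both A→D or both D→A). -/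
/-- A non-constant Bool function on `Fin n` has a switch. -/
lemma exists_switch {n : ℕ} (hn : 0 < n) (f : Fin n → Bool)
    (hf : ¬ ∃ b : Bool, ∀ i, f i = b) :
    ∃ j : Fin n, ∃ h : j.val + 1 < n, f j ≠ f ⟨j.val + 1, h⟩ := by
  by_contra hcon
  push_neg at hcon
  apply hf
  refine ⟨f ⟨0, hn⟩, ?_⟩
  have key : ∀ k (hk : k < n), f ⟨k, hk⟩ = f ⟨0, hn⟩ := by
    intro k
    induction k with
    | zero => intro hk; rfl
    | succ m ih =>
        intro hk
        exact (hcon ⟨m, Nat.lt_of_succ_lt hk⟩ hk).symm.trans (ih (Nat.lt_of_succ_lt hk))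
  intro i
  exact key i.val i.isLt

/-- The transposed solution solves the transposed puzzle. -/
lemma transpose_sol {n : ℕ} {r c : Fin n → Bool} {g : Fin n × Fin n → Fin (n ^ 2)}
    (hg : IsSolution n r c g) : IsSolution n c r (fun p => g (p.2, p.1)) := by
  obtain ⟨hb, hrow, hcol⟩ := hg
  exact ⟨hb.comp (Equiv.prodComm (Fin n) (Fin n)).bijective, hcol, hrow⟩

/-- If columns `j₁ < j₂` have labels `true`, `false`, then `r` is "true then false". -/
lemma downset_core {n : ℕ} {r c : Fin n → Bool} {g : Fin n × Fin n → Fin (n ^ 2)}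
    (hg : IsSolution n r c g) {j₁ j₂ : Fin n} (hj : j₁ < j₂)
    (h1 : c j₁ = true) (h2 : c j₂ = false) :
    ∀ i i' : Fin n, i < i' → r i = false → r i' = false := by
  intro i i' hii hri
  by_contra hri'
  have hri' : r i' = true := by
    cases hb : r i' with
    | false => exact absurd hb hri'
    | true => rfl
  obtain ⟨-, hrow, hcol⟩ := hg
  have hrowi := hrow i
  rw [hri] at hrowi; simp only [Bool.false_eq_true, if_false] at hrowi
  have hrowi' := hrow i'
  rw [hri'] at hrowi'; simp only [if_true] at hrowi'
  have hcol1 := hcol j₁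
  rw [h1] at hcol1; simp only [if_true] at hcol1
  have hcol2 := hcol j₂
  rw [h2] at hcol2; simp only [Bool.false_eq_true, if_false] at hcol2
  have h01 : g (i', j₁) < g (i', j₂) := hrowi' hj
  have h02 : g (i', j₂) < g (i, j₂) := hcol2 hii
  have h03 : g (i, j₂) < g (i, j₁) := hrowi hj
  have h04 : g (i, j₁) < g (i', j₁) := hcol1 hii
  exact lt_irrefl _ (lt_trans (lt_trans (lt_trans h01 h02) h03) h04)

/-- If columns `j₁ < j₂` have labels `false`, `true`, then `r` is "false then true". -/
lemma upset_core {n : ℕ} {r c : Fin n → Bool} {g : Fin n × Fin n → Fin (n ^ 2)}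
    (hg : IsSolution n r c g) {j₁ j₂ : Fin n} (hj : j₁ < j₂)
    (h1 : c j₁ = false) (h2 : c j₂ = true) :
    ∀ i i' : Fin n, i < i' → r i = true → r i' = true := by
  intro i i' hii hri
  by_contra hri'
  have hri' : r i' = false := by
    cases hb : r i' with
    | false => rfl
    | true => exact absurd hb hri'
  obtain ⟨-, hrow, hcol⟩ := hg
  have hrowi := hrow i
  rw [hri] at hrowi; simp only [if_true] at hrowi
  have hrowi' := hrow i'
  rw [hri'] at hrowi'; simp only [Bool.false_eq_true, if_false] at hrowi'
  have hcol1 := hcol j₁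
  rw [h1] at hcol1; simp only [Bool.false_eq_true, if_false] at hcol1
  have hcol2 := hcol j₂
  rw [h2] at hcol2; simp only [if_true] at hcol2
  have h01 : g (i, j₁) < g (i, j₂) := hrowi hj
  have h02 : g (i, j₂) < g (i', j₂) := hcol2 hii
  have h03 : g (i', j₂) < g (i', j₁) := hrowi' hj
  have h04 : g (i', j₁) < g (i, j₁) := hcol1 hii
  exact lt_irrefl _ (lt_trans (lt_trans (lt_trans h01 h02) h03) h04)

lemma switch_val_down {n : ℕ} {f : Fin n → Bool}
    (hd : ∀ i i' : Fin n, i < i' → f i = false → f i' = false)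
    {j : Fin n} {h : j.val + 1 < n} (hs : f j ≠ f ⟨j.val + 1, h⟩) :
    f j = true ∧ f ⟨j.val + 1, h⟩ = false := by
  have hlt : j < (⟨j.val + 1, h⟩ : Fin n) := by simp [Fin.lt_def]
  cases hfj : f j with
  | false => exact absurd (hfj.trans (hd _ _ hlt hfj).symm) hs
  | true =>
      refine ⟨rfl, ?_⟩
      cases hb : f ⟨j.val + 1, h⟩ with
      | false => rfl
      | true => exact absurd (hfj.trans hb.symm) hs

lemma switch_val_up {n : ℕ} {f : Fin n → Bool}
    (hu : ∀ i i' : Fin n, i < i' → f i = true → f i' = true)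
    {j : Fin n} {h : j.val + 1 < n} (hs : f j ≠ f ⟨j.val + 1, h⟩) :
    f j = false ∧ f ⟨j.val + 1, h⟩ = true := by
  have hlt : j < (⟨j.val + 1, h⟩ : Fin n) := by simp [Fin.lt_def]
  cases hfj : f j with
  | true => exact absurd (hfj.trans (hu _ _ hlt hfj).symm) hs
  | false =>
      refine ⟨rfl, ?_⟩
      cases hb : f ⟨j.val + 1, h⟩ with
      | true => rfl
      | false => exact absurd (hfj.trans hb.symm) hs

lemma switch_unique_down {n : ℕ} {f : Fin n → Bool}
    (hd : ∀ i i' : Fin n, i < i' → f i = false → f i' = false)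
    {j j' : Fin n} {h : j.val + 1 < n} {h' : j'.val + 1 < n}
    (hs : f j ≠ f ⟨j.val + 1, h⟩) (hs' : f j' ≠ f ⟨j'.val + 1, h'⟩) : j = j' := by
  obtain ⟨ht, hf⟩ := switch_val_down hd hs
  obtain ⟨ht', hf'⟩ := switch_val_down hd hs'
  by_contra hne
  have key : ∀ (a b : Fin n) (ha : a.val + 1 < n), a < b →
      f a = true → f ⟨a.val + 1, ha⟩ = false → f b = true → False := by
    intro a b ha hab hfa hfa1 hfb
    have hle : a.val + 1 ≤ b.val := hab
    rcases eq_or_lt_of_le hle with he | hl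
    · have : (⟨a.val + 1, ha⟩ : Fin n) = b := Fin.ext he
      rw [this] at hfa1
      rw [hfa1] at hfb; exact Bool.false_ne_true hfb
    · have : f b = false := hd ⟨a.val + 1, ha⟩ b hl hfa1
      rw [this] at hfb; exact Bool.false_ne_true hfb
  rcases lt_or_gt_of_ne hne with hlt | hlt
  · exact key j j' h hlt ht hf ht'
  · exact key j' j h' hlt ht' hf' ht

lemma switch_unique_up {n : ℕ} {f : Fin n → Bool}
    (hu : ∀ i i' : Fin n, i < i' → f i = true → f i' = true)
    {j j' : Fin n} {h : j.val + 1 < n} {h' : j'.val + 1 < n}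
    (hs : f j ≠ f ⟨j.val + 1, h⟩) (hs' : f j' ≠ f ⟨j'.val + 1, h'⟩) : j = j' := by
  obtain ⟨ht, hf⟩ := switch_val_up hu hs
  obtain ⟨ht', hf'⟩ := switch_val_up hu hs'
  by_contra hne
  have key : ∀ (a b : Fin n) (ha : a.val + 1 < n), a < b →
      f a = false → f ⟨a.val + 1, ha⟩ = true → f b = false → False := by
    intro a b ha hab hfa hfa1 hfb
    have hle : a.val + 1 ≤ b.val := hab
    rcases eq_or_lt_of_le hle with he | hl
    · have : (⟨a.val + 1, ha⟩ : Fin n) = b := Fin.ext he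
      rw [this] at hfa1
      rw [hfa1] at hfb; exact (by simp : ¬ (true = false)) hfb
    · have : f b = true := hu ⟨a.val + 1, ha⟩ b hl hfa1
      rw [this] at hfb; exact (by simp : ¬ (true = false)) hfb
  rcases lt_or_gt_of_ne hne with hlt | hlt
  · exact key j j' h hlt ht hf ht'
  · exact key j' j h' hlt ht' hf' ht

/-- If a puzzle with both `r` and `c` non-constant is solvable, then each of
`r` and `c` has exactly one switch, and the switch directions agree. -/
theorem one_switch_of_solvable (n : ℕ) (hn : 2 ≤ n) (r c : Fin n → Bool)
    (hsolv : Solvable n r c)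
    (hr : ¬ ∃ b : Bool, ∀ i, r i = b) (hc : ¬ ∃ b : Bool, ∀ j, c j = b) :
    (∃! j : Fin n, ∃ h : j.val + 1 < n, r j ≠ r ⟨j.val + 1, h⟩) ∧
    (∃! j : Fin n, ∃ h : j.val + 1 < n, c j ≠ c ⟨j.val + 1, h⟩) ∧
    (∀ (j j' : Fin n) (h : j.val + 1 < n) (h' : j'.val + 1 < n),
      r j ≠ r ⟨j.val + 1, h⟩ → c j' ≠ c ⟨j'.val + 1, h'⟩ →
      (r j = true ↔ c j' = true)) := by
  obtain ⟨g, hg⟩ := hsolv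
  have hn0 : 0 < n := by omega
  obtain ⟨jr, hjr, hsr⟩ := exists_switch hn0 r hr
  obtain ⟨jc, hjc, hsc⟩ := exists_switch hn0 c hc
  have hgt : IsSolution n c r (fun p => g (p.2, p.1)) := transpose_sol hg
  have hjclt : jc < (⟨jc.val + 1, hjc⟩ : Fin n) := by simp [Fin.lt_def]
  have hjrlt : jr < (⟨jr.val + 1, hjr⟩ : Fin n) := by simp [Fin.lt_def]
  cases hcv : c jc with
  | true =>
    have hcv2 : c ⟨jc.val + 1, hjc⟩ = false := by
      cases hb : c ⟨jc.val + 1, hjc⟩ with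
      | false => rfl
      | true => exact absurd (hcv.trans hb.symm) hsc
    have hdr : ∀ i i' : Fin n, i < i' → r i = false → r i' = false :=
      downset_core hg hjclt hcv hcv2
    obtain ⟨hrt, hrf⟩ := switch_val_down hdr hsr
    have hdc : ∀ i i' : Fin n, i < i' → c i = false → c i' = false :=
      downset_core hgt hjrlt hrt hrf
    refine ⟨⟨jr, ⟨hjr, hsr⟩, ?_⟩, ⟨jc, ⟨hjc, hsc⟩, ?_⟩, ?_⟩
    · rintro j ⟨h, hs⟩; exact switch_unique_down hdr hs hsr
    · rintro j ⟨h, hs⟩; exact switch_unique_down hdc hs hsc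
    · intro j j' h h' hsj hsj'
      have h1 := (switch_val_down hdr hsj).1
      have h2 := (switch_val_down hdc hsj').1
      rw [h1, h2]
  | false =>
    have hcv2 : c ⟨jc.val + 1, hjc⟩ = true := by
      cases hb : c ⟨jc.val + 1, hjc⟩ with
      | true => rfl
      | false => exact absurd (hcv.trans hb.symm) hsc
    have hur : ∀ i i' : Fin n, i < i' → r i = true → r i' = true :=
      upset_core hg hjclt hcv hcv2
    obtain ⟨hrt, hrf⟩ := switch_val_up hur hsr
    have huc : ∀ i i' : Fin n, i < i' → c i = true → c i' = true :=
      upset_core hgt hjrlt hrt hrf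
    refine ⟨⟨jr, ⟨hjr, hsr⟩, ?_⟩, ⟨jc, ⟨hjc, hsc⟩, ?_⟩, ?_⟩
    · rintro j ⟨h, hs⟩; exact switch_unique_up hur hs hsr
    · rintro j ⟨h, hs⟩; exact switch_unique_up huc hs hsc
    · intro j j' h h' hsj hsj'
      have h1 := (switch_val_up hur hsj).1
      have h2 := (switch_val_up huc hsj').1
      rw [h1, h2]
end

section
/- For n ≥ 2, the 3×3 sorting match puzzle with rows labeled (D, A, D) and columns labeled (D, D, A) is unsolvable: no bijection g : Fin 3 × Fin 3 → Fin 9 satisfies all six monotonicity constraints. -/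
/-- The 3×3 puzzle with rows labeled `(D, A, D)` and columns labeled `(D, D, A)`
is unsolvable. -/
theorem three_by_three_DAD_DDA_unsolvable :
    ¬ ∃ g : Fin 3 × Fin 3 → Fin 9, Function.Bijective g ∧
      StrictAnti (fun j => g (0, j)) ∧ StrictMono (fun j => g (1, j)) ∧
      StrictAnti (fun j => g (2, j)) ∧
      StrictAnti (fun i => g (i, 0)) ∧ StrictAnti (fun i => g (i, 1)) ∧
      StrictMono (fun i => g (i, 2)) := by
  rintro ⟨g, -, -, hr1, hr2, -, hc1, hc2⟩
  have h1 : g (2, 2) < g (2, 1) := hr2 (show (1:Fin 3) < 2 by decide)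
  have h2 : g (2, 1) < g (1, 1) := hc1 (show (1:Fin 3) < 2 by decide)
  have h3 : g (1, 1) < g (1, 2) := hr1 (show (1:Fin 3) < 2 by decide)
  have h4 : g (1, 2) < g (2, 2) := hc2 (show (1:Fin 3) < 2 by decide)
  exact absurd (h1.trans (h2.trans (h3.trans h4))) (lt_irrefl _)
end
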